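/- arXiv:1211.0340 — 5 statements merged into one kernel-verified Lean document; each statement's English description precedes it below -/
import Mathlib

section
/- Poincaré-Friedrichs inequality for the Sobolev-Slobodeckij seminorm: for a bounded domain O ⊂ R^n with diameter D_O and Lebesgue measure |O|, and s ∈ (0,1), every v ∈ H^s(O) satisfies ||v||_{L^2(O)} ≤ |O|^{-1/2} max{1, 2^{-1/2} D_O^{n/2+s}} ( |v|_{s,O} + |∫_O v| ). -/
open MeasureTheory Metric Set Bornology
noncomputable section

/-- Euclidean space `ℝⁿ`. -/
abbrev Euc (n : ℕ) := EuclideanSpace ℝ (Fin n)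

variable {n : ℕ}

/-- Squared `L²(O)` norm. -/
def l2Sq (O : Set (Euc n)) (v : Euc n → ℝ) : ℝ := ∫ x in O, (v x) ^ 2

/-- Squared Sobolev-Slobodeckij seminorm `|v|_{s,O}²`. -/
def slobSq (s : ℝ) (O : Set (Euc n)) (v : Euc n → ℝ) : ℝ :=
  ∫ x in O, ∫ y in O, |v x - v y| ^ 2 / ‖x - y‖ ^ ((n : ℝ) + 2 * s)

/-- Squared Sobolev-Slobodeckij norm `‖v‖_{s,O}²`. -/
def ssNormSq (s : ℝ) (O : Set (Euc n)) (v : Euc n → ℝ) : ℝ := l2Sq O v + slobSq s O v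

/-- Quotient-type seminorm `|v|_{s,O,inf} = inf_c ‖v+c‖_{s,O}`. -/
def quotSemi (s : ℝ) (O : Set (Euc n)) (v : Euc n → ℝ) : ℝ :=
  ⨅ c : ℝ, Real.sqrt (ssNormSq s O (fun x => v x + c))

/-- Membership in `H^s(O)`: square integrable and finite Slobodeckij double integral. -/
def memHs (s : ℝ) (O : Set (Euc n)) (v : Euc n → ℝ) : Prop :=
  MemLp v 2 (volume.restrict O) ∧
  Integrable (fun p : Euc n × Euc n => |v p.1 - v p.2| ^ 2 / ‖p.1 - p.2‖ ^ ((n : ℝ) + 2 * s))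
    ((volume.restrict O).prod (volume.restrict O))

/-- Squared `H¹(O)` seminorm (`L²` norm of the gradient). -/
def h1SemiSq (O : Set (Euc n)) (w : Euc n → ℝ) : ℝ := ∫ x in O, ‖fderiv ℝ w x‖ ^ 2

/-- Membership in `H¹(O)`. -/
def memH1 (O : Set (Euc n)) (w : Euc n → ℝ) : Prop :=
  MemLp w 2 (volume.restrict O) ∧ DifferentiableOn ℝ w O ∧
  MemLp (fun x => ‖fderiv ℝ w x‖) 2 (volume.restrict O)

/-- Squared interpolation seminorm `|v|_{[L²(O),H¹(O)]_s}²` (K-method, `H¹`-seminorm). -/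
def interpSemiSq (s : ℝ) (O : Set (Euc n)) (v : Euc n → ℝ) : ℝ :=
  ∫ t in Set.Ioi (0 : ℝ), t ^ (-2 * s - 1) *
    ⨅ w : {w : Euc n → ℝ // memH1 O w},
      (l2Sq O (fun x => v x - w.1 x) + t ^ 2 * h1SemiSq O w.1)

/-- Squared interpolation norm `‖v‖_{[L²(O),H¹(O)]_s}²` (K-method, full `H¹`-norm). -/
def interpNormSq (s : ℝ) (O : Set (Euc n)) (v : Euc n → ℝ) : ℝ :=
  ∫ t in Set.Ioi (0 : ℝ), t ^ (-2 * s - 1) *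
    ⨅ w : {w : Euc n → ℝ // memH1 O w},
      (l2Sq O (fun x => v x - w.1 x) + t ^ 2 * (l2Sq O w.1 + h1SemiSq O w.1))

/-- Membership in `H¹₀(O)`: approximable in the `H¹` norm by smooth compactly
supported functions with support in `O`. -/
def memH10 (O : Set (Euc n)) (w : Euc n → ℝ) : Prop :=
  memH1 O w ∧ ∃ φ : ℕ → Euc n → ℝ,
    (∀ k, ContDiff ℝ (⊤ : ℕ∞) (φ k) ∧ HasCompactSupport (φ k) ∧ tsupport (φ k) ⊆ O) ∧
    Filter.Tendsto
      (fun k => l2Sq O (fun x => w x - φ k x) + h1SemiSq O (fun x => w x - φ k x))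
      Filter.atTop (nhds 0)

/-- Squared interpolation norm `‖v‖_{[L²(O),H¹₀(O)]_s}²` (K-method, `H¹`-seminorm on `H¹₀`). -/
def interpNorm0Sq (s : ℝ) (O : Set (Euc n)) (v : Euc n → ℝ) : ℝ :=
  ∫ t in Set.Ioi (0 : ℝ), t ^ (-2 * s - 1) *
    ⨅ w : {w : Euc n → ℝ // memH10 O w},
      (l2Sq O (fun x => v x - w.1 x) + t ^ 2 * h1SemiSq O w.1)

/-- Squared weighted Sobolev-Slobodeckij norm `‖v‖_{∼,s,O}²`. -/
def tildeNormSq (s : ℝ) (O : Set (Euc n)) (v : Euc n → ℝ) : ℝ :=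
  slobSq s O v + ∫ x in O, (v x) ^ 2 / (Metric.infDist x (frontier O)) ^ (2 * s)

/-- A bounded Lipschitz domain: open, bounded, and near every boundary point the set
coincides, in some orthonormal frame (isometry `g`), with the region above the graph of a
Lipschitz function `φ` which does not depend on the vertical coordinate `i`. -/
def IsLipschitzDomain (O : Set (Euc n)) : Prop :=
  IsOpen O ∧ IsBounded O ∧ ∀ p ∈ frontier O,
    ∃ (g : Euc n ≃ᵢ Euc n) (i : Fin n) (φ : (Fin n → ℝ) → ℝ) (L : NNReal) (ε : ℝ),
      0 < ε ∧ LipschitzWith L φ ∧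
      (∀ y : Fin n → ℝ, φ y = φ (Function.update y i 0)) ∧
      ∀ x ∈ Metric.ball p ε, (x ∈ O ↔ φ (g x) < (g x) i)

/-- The "inner diameter": supremum of diameters of balls contained in `O`. -/
def innerDiam (O : Set (Euc n)) : ℝ :=
  sSup {d : ℝ | ∃ (x : Euc n) (r : ℝ), 0 < r ∧ Metric.ball x r ⊆ O ∧ d = 2 * r}

/-- Operator norm of the linear part of an affine map. -/
def opN (B : Euc n ≃L[ℝ] Euc n) : ℝ := ‖(B : Euc n →L[ℝ] Euc n)‖

/-- Absolute value of the determinant of the linear part. -/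
def absDet (B : Euc n ≃L[ℝ] Euc n) : ℝ := |LinearMap.det (B.toLinearEquiv.toLinearMap)|


private lemma sqrt_add_le' {a b : ℝ} (ha : 0 ≤ a) (hb : 0 ≤ b) :
    Real.sqrt (a + b) ≤ Real.sqrt a + Real.sqrt b := by
  have h : a + b ≤ (Real.sqrt a + Real.sqrt b) ^ 2 := by
    rw [add_sq, Real.sq_sqrt ha, Real.sq_sqrt hb]
    nlinarith [Real.sqrt_nonneg a, Real.sqrt_nonneg b]
  calc Real.sqrt (a + b) ≤ Real.sqrt ((Real.sqrt a + Real.sqrt b) ^ 2) := Real.sqrt_le_sqrt h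
    _ = Real.sqrt a + Real.sqrt b :=
      Real.sqrt_sq (by positivity)

/-- Poincaré–Friedrichs inequality for the Sobolev–Slobodeckij seminorm,
with explicit constant `|O|^{-1/2} max{1, 2^{-1/2} D_O^{n/2+s}}`. -/
theorem poincare_friedrichs_slob {n : ℕ} (O : Set (Euc n)) (hOo : IsOpen O)
    (hOb : IsBounded O) (s : ℝ) (hs : s ∈ Set.Ioo (0 : ℝ) 1)
    (v : Euc n → ℝ) (hv : memHs s O v) :
    Real.sqrt (l2Sq O v) ≤
      (volume O).toReal ^ (-(1 / 2) : ℝ) *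
        max 1 ((2 : ℝ) ^ (-(1 / 2) : ℝ) * (Metric.diam O) ^ ((n : ℝ) / 2 + s)) *
        (Real.sqrt (slobSq s O v) + |∫ x in O, v x|) := by
  rcases O.eq_empty_or_nonempty with rfl | hne
  · simp [l2Sq, Real.zero_rpow (by norm_num : (-(1/2) : ℝ) ≠ 0)]
  set μ := volume.restrict O with hμ
  have hOm : MeasurableSet O := hOo.measurableSet
  have hμfin : IsFiniteMeasure μ := by
    constructor
    rw [hμ, Measure.restrict_apply_univ]
    exact hOb.measure_lt_top
  set M : ℝ := (volume O).toReal with hM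
  have hMpos : 0 < M := by
    refine ENNReal.toReal_pos ?_ hOb.measure_lt_top.ne
    exact (hOo.measure_pos volume hne).ne'
  set D : ℝ := Metric.diam O with hD
  have hD0 : 0 ≤ D := Metric.diam_nonneg
  set α : ℝ := (n : ℝ) + 2 * s with hα
  have hα0 : 0 ≤ α := by
    have h1 := hs.1
    have h2 : (0 : ℝ) ≤ (n : ℝ) := Nat.cast_nonneg n
    rw [hα]; linarith
  -- integrability facts
  have hv2 : Integrable (fun x => (v x) ^ 2) μ := hv.1.integrable_sq
  have hv1 : Integrable v μ := hv.1.integrable (by norm_num)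
  have h1 : Integrable (fun z : Euc n × Euc n => v z.1 * v z.2) (μ.prod μ) :=
    hv1.mul_prod hv1
  have h2 : Integrable (fun z : Euc n × Euc n => (v z.1) ^ 2) (μ.prod μ) := by
    have := hv2.mul_prod (integrable_const (1 : ℝ) (μ := μ))
    simpa using this
  have h3 : Integrable (fun z : Euc n × Euc n => (v z.2) ^ 2) (μ.prod μ) := by
    have := (integrable_const (1 : ℝ) (μ := μ)).mul_prod hv2
    simpa using this
  have hIint : Integrable (fun z : Euc n × Euc n => (v z.1 - v z.2) ^ 2) (μ.prod μ) := by
    have : (fun z : Euc n × Euc n => (v z.1 - v z.2) ^ 2)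
        = fun z => (v z.1) ^ 2 - 2 * (v z.1 * v z.2) + (v z.2) ^ 2 := by
      funext z; ring
    rw [this]
    exact (h2.sub (h1.const_mul 2)).add h3
  set T : ℝ := ∫ x in O, v x with hT
  set L2 : ℝ := l2Sq O v with hL2
  have hL2nn : 0 ≤ L2 := integral_nonneg fun x => sq_nonneg _
  -- the key identity
  have hI : (∫ z : Euc n × Euc n, (v z.1 - v z.2) ^ 2 ∂(μ.prod μ)) = 2 * M * L2 - 2 * T ^ 2 := by
    have e1 : (∫ z : Euc n × Euc n, (v z.1) ^ 2 ∂(μ.prod μ)) = M * L2 := by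
      have h := integral_prod_mul (μ := μ) (ν := μ) (fun x => (v x) ^ 2) (fun _ => (1 : ℝ))
      simp only [mul_one] at h
      rw [h, integral_const]
      simp only [smul_eq_mul, mul_one, hμ, measureReal_def, Measure.restrict_apply_univ]
      rw [hL2, l2Sq, hM]
      ring
    have e2 : (∫ z : Euc n × Euc n, (v z.2) ^ 2 ∂(μ.prod μ)) = M * L2 := by
      have h := integral_prod_mul (μ := μ) (ν := μ) (fun _ => (1 : ℝ)) (fun x => (v x) ^ 2)
      simp only [one_mul] at h
      rw [h, integral_const]
      simp only [smul_eq_mul, mul_one, hμ, measureReal_def, Measure.restrict_apply_univ]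
      rw [hL2, l2Sq, hM]
    have e3 : (∫ z : Euc n × Euc n, v z.1 * v z.2 ∂(μ.prod μ)) = T ^ 2 := by
      rw [integral_prod_mul (μ := μ) (ν := μ) v v, ← hT, sq]
    have expand : (fun z : Euc n × Euc n => (v z.1 - v z.2) ^ 2)
        = fun z => (v z.1) ^ 2 - 2 * (v z.1 * v z.2) + (v z.2) ^ 2 := by
      funext z; ring
    have A : (∫ z : Euc n × Euc n, ((v z.1) ^ 2 - 2 * (v z.1 * v z.2) + (v z.2) ^ 2) ∂(μ.prod μ))
        = (∫ z : Euc n × Euc n, ((v z.1) ^ 2 - 2 * (v z.1 * v z.2)) ∂(μ.prod μ))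
          + ∫ z : Euc n × Euc n, (v z.2) ^ 2 ∂(μ.prod μ) :=
      integral_add (h2.sub (h1.const_mul 2)) h3
    have B : (∫ z : Euc n × Euc n, ((v z.1) ^ 2 - 2 * (v z.1 * v z.2)) ∂(μ.prod μ))
        = (∫ z : Euc n × Euc n, (v z.1) ^ 2 ∂(μ.prod μ))
          - ∫ z : Euc n × Euc n, 2 * (v z.1 * v z.2) ∂(μ.prod μ) :=
      integral_sub h2 (h1.const_mul 2)
    have C : (∫ z : Euc n × Euc n, 2 * (v z.1 * v z.2) ∂(μ.prod μ))
        = 2 * ∫ z : Euc n × Euc n, v z.1 * v z.2 ∂(μ.prod μ) := integral_const_mul 2 _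
    rw [expand, A, B, C, e1, e2, e3]
    ring
  -- pointwise bound and integral comparison
  set S : ℝ := slobSq s O v with hS
  have hSprod : S = ∫ z : Euc n × Euc n, |v z.1 - v z.2| ^ 2 / ‖z.1 - z.2‖ ^ α ∂(μ.prod μ) := by
    have h := integral_integral (μ := μ) (ν := μ)
      (f := fun x y => |v x - v y| ^ 2 / ‖x - y‖ ^ α) (by exact hv.2)
    rw [hS, slobSq]
    exact h
  have hSnn : 0 ≤ S := by
    rw [hSprod]
    exact integral_nonneg fun z => by positivity
  have hcomp : (∫ z : Euc n × Euc n, (v z.1 - v z.2) ^ 2 ∂(μ.prod μ))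
      ≤ D ^ α * S := by
    rw [hSprod, ← integral_const_mul]
    refine integral_mono_ae hIint (hv.2.const_mul _) ?_
    rw [hμ, Measure.prod_restrict]
    filter_upwards [ae_restrict_mem (hOm.prod hOm)] with z hz
    obtain ⟨hz1, hz2⟩ := hz
    rcases eq_or_ne z.1 z.2 with h | h
    · simp [h]
    · have hd : 0 < ‖z.1 - z.2‖ := by
        simpa [sub_eq_zero] using h
      have hdD : ‖z.1 - z.2‖ ≤ D := by
        rw [← dist_eq_norm]
        exact Metric.dist_le_diam_of_mem hOb hz1 hz2
      have hpow : ‖z.1 - z.2‖ ^ α ≤ D ^ α := Real.rpow_le_rpow hd.le hdD hα0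
      have hpowpos : (0 : ℝ) < ‖z.1 - z.2‖ ^ α := Real.rpow_pos_of_pos hd α
      rw [← sq_abs (v z.1 - v z.2), mul_div_assoc', le_div_iff₀ hpowpos]
      have habs : 0 ≤ |v z.1 - v z.2| ^ 2 := sq_nonneg _
      calc |v z.1 - v z.2| ^ 2 * ‖z.1 - z.2‖ ^ α ≤ |v z.1 - v z.2| ^ 2 * D ^ α :=
            mul_le_mul_of_nonneg_left hpow habs
        _ = D ^ α * |v z.1 - v z.2| ^ 2 := mul_comm _ _
  -- combine: 2 M L2 ≤ D^α S + 2 T²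
  have hkey : L2 ≤ (D ^ α / 2 * S + T ^ 2) / M := by
    rw [le_div_iff₀ hMpos]
    nlinarith [hI, hcomp]
  -- take square roots
  have hfin : Real.sqrt L2 ≤ (Real.sqrt M)⁻¹ *
      (Real.sqrt (D ^ α / 2) * Real.sqrt S + |T|) := by
    have h4 : Real.sqrt L2 ≤ Real.sqrt ((D ^ α / 2 * S + T ^ 2) / M) := Real.sqrt_le_sqrt hkey
    rw [Real.sqrt_div' _ hMpos.le] at h4
    refine h4.trans ?_
    rw [div_eq_inv_mul]
    refine mul_le_mul_of_nonneg_left ?_ (inv_nonneg.mpr (Real.sqrt_nonneg M))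
    calc Real.sqrt (D ^ α / 2 * S + T ^ 2)
        ≤ Real.sqrt (D ^ α / 2 * S) + Real.sqrt (T ^ 2) :=
          sqrt_add_le' (by positivity) (sq_nonneg _)
      _ = Real.sqrt (D ^ α / 2) * Real.sqrt S + |T| := by
          rw [Real.sqrt_mul (by positivity), Real.sqrt_sq_eq_abs]
  -- identify constants
  have hMrpow : M ^ (-(1 / 2) : ℝ) = (Real.sqrt M)⁻¹ := by
    rw [Real.rpow_neg hMpos.le, Real.sqrt_eq_rpow]
  have hc : Real.sqrt (D ^ α / 2) = (2 : ℝ) ^ (-(1 / 2) : ℝ) * D ^ ((n : ℝ) / 2 + s) := by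
    rw [Real.sqrt_div (by positivity) 2, Real.sqrt_eq_rpow (D ^ α), ← Real.rpow_mul hD0,
      Real.sqrt_eq_rpow 2, div_eq_mul_inv, ← Real.rpow_neg (by norm_num : (0:ℝ) ≤ 2)]
    rw [mul_comm]
    congr 1
    rw [hα]; ring
  set c : ℝ := (2 : ℝ) ^ (-(1 / 2) : ℝ) * D ^ ((n : ℝ) / 2 + s) with hcdef
  have hc0 : 0 ≤ c := hc ▸ Real.sqrt_nonneg _
  rw [hMrpow]
  refine hfin.trans ?_
  have h1c : (1 : ℝ) ≤ max 1 c := le_max_left _ _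
  have hcc : c ≤ max 1 c := le_max_right _ _
  have hSs : 0 ≤ Real.sqrt S := Real.sqrt_nonneg _
  have hTT : 0 ≤ |T| := abs_nonneg _
  have key : Real.sqrt (D ^ α / 2) * Real.sqrt S + |T| ≤ max 1 c * (Real.sqrt S + |T|) := by
    rw [hc]
    nlinarith
  calc (Real.sqrt M)⁻¹ * (Real.sqrt (D ^ α / 2) * Real.sqrt S + |T|)
      ≤ (Real.sqrt M)⁻¹ * (max 1 c * (Real.sqrt S + |T|)) :=
        mul_le_mul_of_nonneg_left key (inv_nonneg.mpr (Real.sqrt_nonneg M))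
    _ = (Real.sqrt M)⁻¹ * max 1 c * (Real.sqrt S + |T|) := (mul_assoc _ _ _).symm

end
end

section
/- For a bounded Lipschitz domain O, s ∈ (0,1), and any constant K such that ||v||_{s,O} ≤ K ||v||_{[L^2(O),H^1(O)]_s} for all v ∈ H^s(O), one has the bound inf_{c∈R} ||v+c||_{s,O}^2 ≤ 3 K^2 |v|_{[L^2(O),H^1(O)]_s}^2 + (K^2/(s(1-s))) inf_{c∈R} ||v+c||_{L^2(O)}^2 for all v ∈ H^s(O). -/
open MeasureTheory Metric Set Bornology
noncomputable section

variable {n : ℕ}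

/-! ### Auxiliary lemmas -/

lemma l2Sq_nonneg (O : Set (Euc n)) (v : Euc n → ℝ) : 0 ≤ l2Sq O v :=
  integral_nonneg fun _ => sq_nonneg _

lemma slobSq_nonneg (s : ℝ) (O : Set (Euc n)) (v : Euc n → ℝ) : 0 ≤ slobSq s O v :=
  integral_nonneg fun x => integral_nonneg fun y =>
    div_nonneg (pow_nonneg (abs_nonneg _) 2) (Real.rpow_nonneg (norm_nonneg _) _)

lemma ssNormSq_nonneg (s : ℝ) (O : Set (Euc n)) (v : Euc n → ℝ) : 0 ≤ ssNormSq s O v :=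
  add_nonneg (l2Sq_nonneg O v) (slobSq_nonneg s O v)

lemma h1SemiSq_nonneg (O : Set (Euc n)) (w : Euc n → ℝ) : 0 ≤ h1SemiSq O w :=
  integral_nonneg fun _ => sq_nonneg _

lemma memH1_zero (O : Set (Euc n)) : memH1 O (fun _ => 0) := by
  refine ⟨MemLp.zero', differentiableOn_const 0, ?_⟩
  have h : (fun x : Euc n => ‖fderiv ℝ (fun _ : Euc n => (0:ℝ)) x‖) = fun _ => 0 := by
    funext x; simp [fderiv_const]
  rw [h]; exact MemLp.zero'

lemma l2Sq_zero (O : Set (Euc n)) : l2Sq O (fun _ => 0) = 0 := by simp [l2Sq]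

lemma h1SemiSq_zero (O : Set (Euc n)) : h1SemiSq O (fun _ => 0) = 0 := by
  simp [h1SemiSq, fderiv_const]

lemma h1SemiSq_add_const (O : Set (Euc n)) (w : Euc n → ℝ) (c : ℝ) :
    h1SemiSq O (fun x => w x + c) = h1SemiSq O w := by
  simp only [h1SemiSq, fderiv_add_const]

lemma memH1_add_const {O : Set (Euc n)} [IsFiniteMeasure (volume.restrict O)]
    {w : Euc n → ℝ} (hw : memH1 O w) (c : ℝ) : memH1 O (fun x => w x + c) := by
  refine ⟨hw.1.add (memLp_const c), hw.2.1.add_const c, ?_⟩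
  have h : (fun x => ‖fderiv ℝ (fun x => w x + c) x‖) = fun x => ‖fderiv ℝ w x‖ := by
    funext x; rw [fderiv_add_const]
  rw [h]; exact hw.2.2

lemma measurable_inf_quad {ι : Sort*} (a b : ι → ℝ) (ha : ∀ i, 0 ≤ a i) (hb : ∀ i, 0 ≤ b i) :
    Measurable fun t : ℝ => ⨅ i, (a i + t ^ 2 * b i) := by
  have key : (fun t : ℝ => ⨅ i, (a i + t ^ 2 * b i)) =
      (fun u : ℝ => ⨅ i, (a i + max u 0 * b i)) ∘ (fun t : ℝ => t ^ 2) := by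
    funext t
    simp only [Function.comp_apply, max_eq_left (sq_nonneg t)]
  have hm : Monotone fun u : ℝ => ⨅ i, (a i + max u 0 * b i) := by
    intro u u' h
    rcases isEmpty_or_nonempty ι with hι | hι
    · simp [Real.iInf_of_isEmpty]
    refine ciInf_mono ⟨0, ?_⟩ fun i => ?_
    · rintro x ⟨i, rfl⟩
      exact add_nonneg (ha i) (mul_nonneg (le_max_right _ _) (hb i))
    · have := mul_le_mul_of_nonneg_right (max_le_max h (le_refl (0:ℝ))) (hb i)
      linarith
  rw [key]
  exact hm.measurable.comp (measurable_id.pow_const 2)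

lemma interpSemiSq_nonneg (s : ℝ) (O : Set (Euc n)) (v : Euc n → ℝ) :
    0 ≤ interpSemiSq s O v := by
  simp only [interpSemiSq]
  refine setIntegral_nonneg measurableSet_Ioi fun t ht => ?_
  exact mul_nonneg (Real.rpow_nonneg (le_of_lt ht) _)
    (Real.iInf_nonneg fun w => add_nonneg (l2Sq_nonneg _ _)
      (mul_nonneg (sq_nonneg t) (h1SemiSq_nonneg _ _)))

lemma interpNormSq_nonneg (s : ℝ) (O : Set (Euc n)) (v : Euc n → ℝ) :
    0 ≤ interpNormSq s O v := by
  simp only [interpNormSq]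
  refine setIntegral_nonneg measurableSet_Ioi fun t ht => ?_
  exact mul_nonneg (Real.rpow_nonneg (le_of_lt ht) _)
    (Real.iInf_nonneg fun w => add_nonneg (l2Sq_nonneg _ _)
      (mul_nonneg (sq_nonneg t) (add_nonneg (l2Sq_nonneg _ _) (h1SemiSq_nonneg _ _))))

set_option maxHeartbeats 2000000 in
/-- The analytic heart: `‖v+c‖²_{[L²,H¹]_s} ≤ 3 |v|²_{[L²,H¹]_s} + (1/(s(1-s))) ‖v+c‖²_{L²}`. -/
lemma interpNormSq_add_const_le (O : Set (Euc n)) (hObd : IsBounded O)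
    (s : ℝ) (hs : s ∈ Set.Ioo (0 : ℝ) 1) (v : Euc n → ℝ)
    (hv : MemLp v 2 (volume.restrict O)) (c : ℝ) :
    interpNormSq s O (fun x => v x + c) ≤
      3 * interpSemiSq s O v + 1 / (s * (1 - s)) * l2Sq O (fun x => v x + c) := by
  obtain ⟨hs0, hs1⟩ := hs
  haveI : IsFiniteMeasure (volume.restrict O) := by
    constructor
    rw [Measure.restrict_apply_univ]
    exact hObd.measure_lt_top
  haveI : Nonempty {w : Euc n → ℝ // memH1 O w} := ⟨⟨fun _ => 0, memH1_zero O⟩⟩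
  set L := l2Sq O (fun x => v x + c) with hL
  have hL0 : 0 ≤ L := l2Sq_nonneg _ _
  set kF : ℝ → ℝ := fun t => ⨅ w : {w : Euc n → ℝ // memH1 O w},
    (l2Sq O (fun x => v x + c - w.1 x) + t ^ 2 * (l2Sq O w.1 + h1SemiSq O w.1)) with hkF
  set kG : ℝ → ℝ := fun t => ⨅ w : {w : Euc n → ℝ // memH1 O w},
    (l2Sq O (fun x => v x - w.1 x) + t ^ 2 * h1SemiSq O w.1) with hkG
  have hbdd : ∀ (f : {w : Euc n → ℝ // memH1 O w} → ℝ), (∀ i, 0 ≤ f i) →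
      BddBelow (Set.range f) := by
    intro f hf; exact ⟨0, by rintro x ⟨i, rfl⟩; exact hf i⟩
  have hFtermnn : ∀ (t : ℝ) (w : {w : Euc n → ℝ // memH1 O w}),
      0 ≤ l2Sq O (fun x => v x + c - w.1 x) + t ^ 2 * (l2Sq O w.1 + h1SemiSq O w.1) :=
    fun t w => add_nonneg (l2Sq_nonneg _ _) (mul_nonneg (sq_nonneg t)
      (add_nonneg (l2Sq_nonneg _ _) (h1SemiSq_nonneg _ _)))
  have hGtermnn : ∀ (t : ℝ) (w : {w : Euc n → ℝ // memH1 O w}),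
      0 ≤ l2Sq O (fun x => v x - w.1 x) + t ^ 2 * h1SemiSq O w.1 :=
    fun t w => add_nonneg (l2Sq_nonneg _ _) (mul_nonneg (sq_nonneg t) (h1SemiSq_nonneg _ _))
  have hkF0 : ∀ t, 0 ≤ kF t := fun t => Real.iInf_nonneg (hFtermnn t)
  have hkG0 : ∀ t, 0 ≤ kG t := fun t => Real.iInf_nonneg (hGtermnn t)
  have hkFm : Measurable kF := by
    rw [hkF]
    apply measurable_inf_quad
    · exact fun w => l2Sq_nonneg _ _
    · exact fun w => add_nonneg (l2Sq_nonneg _ _) (h1SemiSq_nonneg _ _)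
  have hkGm : Measurable kG := by
    rw [hkG]
    apply measurable_inf_quad
    · exact fun w => l2Sq_nonneg _ _
    · exact fun w => h1SemiSq_nonneg _ _
  have hGleF : ∀ t : ℝ, kG t ≤ kF t := by
    intro t
    refine le_ciInf fun w => ?_
    have hw' : memH1 O (fun x => w.1 x + -c) := memH1_add_const w.2 (-c)
    have h1 : kG t ≤ l2Sq O (fun x => v x - (w.1 x + -c)) +
        t ^ 2 * h1SemiSq O (fun x => w.1 x + -c) :=
      ciInf_le (hbdd _ (hGtermnn t)) ⟨fun x => w.1 x + -c, hw'⟩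
    have e1 : (fun x => v x - (w.1 x + -c)) = (fun x => v x + c - w.1 x) := by funext x; ring
    rw [e1, h1SemiSq_add_const] at h1
    refine h1.trans ?_
    have h2 : t ^ 2 * h1SemiSq O w.1 ≤ t ^ 2 * (l2Sq O w.1 + h1SemiSq O w.1) := by
      apply mul_le_mul_of_nonneg_left _ (sq_nonneg t)
      linarith [l2Sq_nonneg O w.1]
    linarith
  have hkFleL : ∀ t : ℝ, kF t ≤ L := by
    intro t
    have h0 : kF t ≤ l2Sq O (fun x => v x + c - (fun _ : Euc n => (0:ℝ)) x) +
        t ^ 2 * (l2Sq O (fun _ => 0) + h1SemiSq O (fun _ => 0)) :=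
      ciInf_le (hbdd _ (hFtermnn t)) ⟨fun _ => 0, memH1_zero O⟩
    have e1 : (fun x => v x + c - (fun _ : Euc n => (0:ℝ)) x) = fun x => v x + c := by
      funext x; simp
    rw [e1, l2Sq_zero, h1SemiSq_zero] at h0
    rw [hL]
    simpa using h0
  have hkFle : ∀ t ∈ Set.Ioc (0:ℝ) 1, kF t ≤ 3 * kG t + 2 * t ^ 2 * L := by
    rintro t ⟨ht0, ht1⟩
    have ht2 : t ^ 2 ≤ 1 := by nlinarith
    have key : ∀ w : {w : Euc n → ℝ // memH1 O w}, (kF t - 2 * t ^ 2 * L) / 3 ≤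
        l2Sq O (fun x => v x - w.1 x) + t ^ 2 * h1SemiSq O w.1 := by
      intro w
      have hw' : memH1 O (fun x => w.1 x + c) := memH1_add_const w.2 c
      have h0 : kF t ≤ l2Sq O (fun x => v x + c - (w.1 x + c)) +
          t ^ 2 * (l2Sq O (fun x => w.1 x + c) + h1SemiSq O (fun x => w.1 x + c)) :=
        ciInf_le (hbdd _ (hFtermnn t)) ⟨fun x => w.1 x + c, hw'⟩
      have e1 : (fun x => v x + c - (w.1 x + c)) = fun x => v x - w.1 x := by funext x; ring
      rw [e1, h1SemiSq_add_const] at h0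
      have hintw : Integrable (fun x => (w.1 x + c) ^ 2) (volume.restrict O) :=
        (w.2.1.add (memLp_const c)).integrable_sq
      have hintvc : Integrable (fun x => (v x + c) ^ 2) (volume.restrict O) :=
        (hv.add (memLp_const c)).integrable_sq
      have hintvw : Integrable (fun x => (v x - w.1 x) ^ 2) (volume.restrict O) :=
        (hv.sub w.2.1).integrable_sq
      have hl2 : l2Sq O (fun x => w.1 x + c) ≤ 2 * L + 2 * l2Sq O (fun x => v x - w.1 x) := by
        have hmono : (∫ x in O, (w.1 x + c) ^ 2) ≤
            ∫ x in O, (2 * (v x + c) ^ 2 + 2 * (v x - w.1 x) ^ 2) :=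
          integral_mono hintw ((hintvc.const_mul 2).add (hintvw.const_mul 2))
            (fun x => by nlinarith [sq_nonneg (v x + c + (v x - w.1 x))])
        have hsplit : (∫ x in O, (2 * (v x + c) ^ 2 + 2 * (v x - w.1 x) ^ 2)) =
            2 * (∫ x in O, (v x + c) ^ 2) + 2 * ∫ x in O, (v x - w.1 x) ^ 2 := by
          rw [integral_add (hintvc.const_mul 2) (hintvw.const_mul 2),
            integral_const_mul, integral_const_mul]
        simp only [l2Sq, hL]
        rw [hsplit] at hmono
        exact hmono
      have hh1 : 0 ≤ h1SemiSq O w.1 := h1SemiSq_nonneg _ _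
      have hl2vw : 0 ≤ l2Sq O (fun x => v x - w.1 x) := l2Sq_nonneg _ _
      have ht2nn : 0 ≤ t ^ 2 := sq_nonneg t
      rw [div_le_iff₀ (by norm_num : (0:ℝ) < 3)]
      have c1 := mul_le_mul_of_nonneg_left hl2 ht2nn
      have c2 := mul_le_mul_of_nonneg_right ht2 hl2vw
      nlinarith [h0]
    have h2 : (kF t - 2 * t ^ 2 * L) / 3 ≤ kG t := le_ciInf key
    rw [div_le_iff₀ (by norm_num : (0:ℝ) < 3)] at h2
    linarith
  set F : ℝ → ℝ := fun t => t ^ (-2 * s - 1) * kF t with hF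
  set G : ℝ → ℝ := fun t => t ^ (-2 * s - 1) * kG t with hG
  have hIN : interpNormSq s O (fun x => v x + c) = ∫ t in Set.Ioi (0:ℝ), F t := by
    simp only [interpNormSq, hF, hkF]
  have hIS : interpSemiSq s O v = ∫ t in Set.Ioi (0:ℝ), G t := by
    simp only [interpSemiSq, hG, hkG]
  have hIS0 : 0 ≤ interpSemiSq s O v := interpSemiSq_nonneg s O v
  by_cases hFint : IntegrableOn F (Set.Ioi (0:ℝ)) volume
  · -- integrable case
    have hGm : Measurable G := by
      rw [hG]; exact (measurable_id.pow_const (-2 * s - 1)).mul hkGm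
    have hGF : ∀ t ∈ Set.Ioi (0:ℝ), ‖G t‖ ≤ F t := by
      intro t ht
      have h1 : 0 ≤ G t := mul_nonneg (Real.rpow_nonneg (le_of_lt ht) _) (hkG0 t)
      rw [Real.norm_eq_abs, abs_of_nonneg h1]
      exact mul_le_mul_of_nonneg_left (hGleF t) (Real.rpow_nonneg (le_of_lt ht) _)
    have hGint : IntegrableOn G (Set.Ioi (0:ℝ)) volume :=
      Integrable.mono' hFint hGm.aestronglyMeasurable
        ((ae_restrict_iff' measurableSet_Ioi).2 (Filter.Eventually.of_forall hGF))
    have hunion : Set.Ioc (0:ℝ) 1 ∪ Set.Ioi 1 = Set.Ioi 0 := Set.Ioc_union_Ioi_eq_Ioi zero_le_one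
    have hFint1 : IntegrableOn F (Set.Ioc (0:ℝ) 1) volume :=
      hFint.mono_set (by rw [← hunion]; exact Set.subset_union_left)
    have hFint2 : IntegrableOn F (Set.Ioi (1:ℝ)) volume :=
      hFint.mono_set (by rw [← hunion]; exact Set.subset_union_right)
    have hGint1 : IntegrableOn G (Set.Ioc (0:ℝ) 1) volume :=
      hGint.mono_set (by rw [← hunion]; exact Set.subset_union_left)
    have hsplitF : (∫ t in Set.Ioi (0:ℝ), F t) =
        (∫ t in Set.Ioc (0:ℝ) 1, F t) + ∫ t in Set.Ioi (1:ℝ), F t := by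
      rw [← hunion, setIntegral_union (Set.Ioc_disjoint_Ioi le_rfl) measurableSet_Ioi hFint1 hFint2]
    have hrint1 : IntegrableOn (fun t : ℝ => t ^ (1 - 2 * s)) (Set.Ioc (0:ℝ) 1) volume := by
      rw [integrableOn_Ioc_iff_integrableOn_Ioo]
      exact (intervalIntegral.integrableOn_Ioo_rpow_iff zero_lt_one).2 (by linarith)
    have hrval1 : (∫ t in Set.Ioc (0:ℝ) 1, t ^ (1 - 2 * s)) = 1 / (2 - 2 * s) := by
      rw [← intervalIntegral.integral_of_le zero_le_one, integral_rpow (Or.inl (by linarith)),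
        Real.one_rpow, Real.zero_rpow (by intro h; nlinarith)]
      norm_num
      ring_nf
    have hrint2 : IntegrableOn (fun t : ℝ => t ^ (-2 * s - 1)) (Set.Ioi (1:ℝ)) volume :=
      (integrableOn_Ioi_rpow_iff zero_lt_one).2 (by linarith)
    have hrval2 : (∫ t in Set.Ioi (1:ℝ), t ^ (-2 * s - 1)) = 1 / (2 * s) := by
      rw [integral_Ioi_rpow_of_lt (by linarith) zero_lt_one, Real.one_rpow]
      have e : -2 * s - 1 + 1 = -(2 * s) := by ring
      rw [e, neg_div_neg_eq]
    have hb1 : (∫ t in Set.Ioc (0:ℝ) 1, F t) ≤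
        3 * (∫ t in Set.Ioc (0:ℝ) 1, G t) + 2 * L * (1 / (2 - 2 * s)) := by
      have hg1 : IntegrableOn (fun t : ℝ => 3 * G t) (Set.Ioc (0:ℝ) 1) volume := hGint1.const_mul 3
      have hg2 : IntegrableOn (fun t : ℝ => 2 * L * t ^ (1 - 2 * s)) (Set.Ioc (0:ℝ) 1) volume :=
        hrint1.const_mul (2 * L)
      have hpt : ∀ t ∈ Set.Ioc (0:ℝ) 1, F t ≤ 3 * G t + 2 * L * t ^ (1 - 2 * s) := by
        rintro t ht
        have ht0 : 0 < t := ht.1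
        have e : t ^ (-2 * s - 1) * t ^ (2:ℕ) = t ^ (1 - 2 * s) := by
          rw [← Real.rpow_natCast t 2, ← Real.rpow_add ht0]
          norm_num
          ring_nf
        have step1 : F t ≤ t ^ (-2 * s - 1) * (3 * kG t + 2 * t ^ 2 * L) :=
          mul_le_mul_of_nonneg_left (hkFle t ht) (Real.rpow_nonneg ht0.le _)
        have e2 : t ^ (-2 * s - 1) * (3 * kG t + 2 * t ^ 2 * L) =
            3 * G t + 2 * L * (t ^ (-2 * s - 1) * t ^ (2:ℕ)) := by
          rw [hG]; ring
        rw [e2, e] at step1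
        exact step1
      calc (∫ t in Set.Ioc (0:ℝ) 1, F t)
          ≤ ∫ t in Set.Ioc (0:ℝ) 1, (3 * G t + 2 * L * t ^ (1 - 2 * s)) :=
            setIntegral_mono_on hFint1 (hg1.add hg2) measurableSet_Ioc hpt
        _ = 3 * (∫ t in Set.Ioc (0:ℝ) 1, G t) + 2 * L * ∫ t in Set.Ioc (0:ℝ) 1, t ^ (1 - 2 * s) := by
            rw [integral_add hg1 hg2, integral_const_mul, integral_const_mul]
        _ = 3 * (∫ t in Set.Ioc (0:ℝ) 1, G t) + 2 * L * (1 / (2 - 2 * s)) := by rw [hrval1]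
    have hb2 : (∫ t in Set.Ioi (1:ℝ), F t) ≤ L * (1 / (2 * s)) := by
      have hpt : ∀ t ∈ Set.Ioi (1:ℝ), F t ≤ t ^ (-2 * s - 1) * L := by
        intro t ht
        have ht0 : (0:ℝ) ≤ t := by linarith [Set.mem_Ioi.1 ht]
        exact mul_le_mul_of_nonneg_left (hkFleL t) (Real.rpow_nonneg ht0 _)
      calc (∫ t in Set.Ioi (1:ℝ), F t)
          ≤ ∫ t in Set.Ioi (1:ℝ), t ^ (-2 * s - 1) * L :=
            setIntegral_mono_on hFint2 (hrint2.mul_const L) measurableSet_Ioi hpt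
        _ = (∫ t in Set.Ioi (1:ℝ), t ^ (-2 * s - 1)) * L := by rw [integral_mul_const]
        _ = 1 / (2 * s) * L := by rw [hrval2]
        _ = L * (1 / (2 * s)) := by ring
    have hGmono : (∫ t in Set.Ioc (0:ℝ) 1, G t) ≤ ∫ t in Set.Ioi (0:ℝ), G t := by
      refine setIntegral_mono_set hGint ?_ (Set.Ioc_subset_Ioi_self.eventuallyLE)
      refine (ae_restrict_iff' measurableSet_Ioi).2 (Filter.Eventually.of_forall ?_)
      intro t ht
      exact mul_nonneg (Real.rpow_nonneg (le_of_lt ht) _) (hkG0 t)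
    have hcoef : 2 * (1 / (2 - 2 * s)) + 1 / (2 * s) ≤ 1 / (s * (1 - s)) := by
      have h1s : (0:ℝ) < 1 - s := by linarith
      have h2s : (0:ℝ) < 2 * s := by linarith
      have h22s : (0:ℝ) < 2 - 2 * s := by linarith
      have hss : (0:ℝ) < s * (1 - s) := mul_pos hs0 h1s
      have he : 1 / (s * (1 - s)) - (2 * (1 / (2 - 2 * s)) + 1 / (2 * s)) =
          (1 - s) / (2 * s * (1 - s)) := by
        field_simp
        ring
      have hden : (0:ℝ) < 2 * s * (1 - s) := by nlinarith
      have hnn : 0 ≤ (1 - s) / (2 * s * (1 - s)) := div_nonneg h1s.le hden.le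
      linarith
    have hc : 2 * L * (1 / (2 - 2 * s)) + L * (1 / (2 * s)) ≤ 1 / (s * (1 - s)) * L := by
      nlinarith [mul_le_mul_of_nonneg_right hcoef hL0]
    rw [hIN, hsplitF, hIS]
    linarith [hb1, hb2, hGmono, hc]
  · -- non-integrable case: the integral is zero
    rw [hIN, integral_undef hFint]
    have hss : (0:ℝ) < s * (1 - s) := mul_pos hs0 (by linarith)
    have h1 : 0 ≤ 1 / (s * (1 - s)) := div_nonneg zero_le_one hss.le
    have h2 : 0 ≤ 1 / (s * (1 - s)) * L := mul_nonneg h1 hL0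
    linarith

/-- `inf_c ‖v+c‖_{s,O}² ≤ 3K²|v|_{[L²,H¹]_s}² + (K²/(s(1-s))) inf_c ‖v+c‖_{L²}²`. -/
theorem inf_ssNormSq_le {n : ℕ} (O : Set (Euc n)) (hO : IsLipschitzDomain O)
    (s : ℝ) (hs : s ∈ Set.Ioo (0 : ℝ) 1) (K : ℝ)
    (hK : ∀ w : Euc n → ℝ, memHs s O w →
      Real.sqrt (ssNormSq s O w) ≤ K * Real.sqrt (interpNormSq s O w)) :
    ∀ v : Euc n → ℝ, memHs s O v →
      (⨅ c : ℝ, ssNormSq s O (fun x => v x + c)) ≤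
        3 * K ^ 2 * interpSemiSq s O v +
          K ^ 2 / (s * (1 - s)) * ⨅ c : ℝ, l2Sq O (fun x => v x + c) := by
  intro v hv
  obtain ⟨hs0, hs1⟩ := hs
  have hObd : IsBounded O := hO.2.1
  haveI : IsFiniteMeasure (volume.restrict O) := by
    constructor
    rw [Measure.restrict_apply_univ]
    exact hObd.measure_lt_top
  have hss : (0:ℝ) < s * (1 - s) := mul_pos hs0 (by linarith)
  have hmem : ∀ c : ℝ, memHs s O (fun x => v x + c) := by
    intro c
    exact ⟨hv.1.add (memLp_const c), by simpa using hv.2⟩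
  have hBdd : BddBelow (Set.range fun c : ℝ => ssNormSq s O (fun x => v x + c)) :=
    ⟨0, by rintro x ⟨c, rfl⟩; exact ssNormSq_nonneg _ _ _⟩
  set A := interpSemiSq s O v with hA
  set D := K ^ 2 / (s * (1 - s)) with hD
  have hD0 : 0 ≤ D := div_nonneg (sq_nonneg K) hss.le
  have step : ∀ c : ℝ, (⨅ c : ℝ, ssNormSq s O (fun x => v x + c)) ≤
      3 * K ^ 2 * A + D * l2Sq O (fun x => v x + c) := by
    intro c
    have h1 : (⨅ c : ℝ, ssNormSq s O (fun x => v x + c)) ≤ ssNormSq s O (fun x => v x + c) :=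
      ciInf_le hBdd c
    have h2 := hK _ (hmem c)
    have hssn : 0 ≤ ssNormSq s O (fun x => v x + c) := ssNormSq_nonneg _ _ _
    have hin : 0 ≤ interpNormSq s O (fun x => v x + c) := interpNormSq_nonneg _ _ _
    have h3 : ssNormSq s O (fun x => v x + c) ≤ K ^ 2 * interpNormSq s O (fun x => v x + c) := by
      have h4 : Real.sqrt (ssNormSq s O (fun x => v x + c)) ^ 2 ≤
          (K * Real.sqrt (interpNormSq s O (fun x => v x + c))) ^ 2 :=
        pow_le_pow_left₀ (Real.sqrt_nonneg _) h2 2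
      rw [Real.sq_sqrt hssn, mul_pow, Real.sq_sqrt hin] at h4
      exact h4
    have h5 := interpNormSq_add_const_le O hObd s ⟨hs0, hs1⟩ v hv.1 c
    have hK2 : (0:ℝ) ≤ K ^ 2 := sq_nonneg K
    calc (⨅ c : ℝ, ssNormSq s O (fun x => v x + c))
        ≤ K ^ 2 * interpNormSq s O (fun x => v x + c) := h1.trans h3
      _ ≤ K ^ 2 * (3 * interpSemiSq s O v + 1 / (s * (1 - s)) * l2Sq O (fun x => v x + c)) :=
          mul_le_mul_of_nonneg_left h5 hK2
      _ = 3 * K ^ 2 * A + D * l2Sq O (fun x => v x + c) := by rw [hA, hD]; ring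
  rcases eq_or_lt_of_le hD0 with hDz | hDpos
  · have h := step 0
    rw [← hDz] at h
    have hB0 : (0:ℝ) ≤ ⨅ c : ℝ, l2Sq O (fun x => v x + c) :=
      Real.iInf_nonneg fun c => l2Sq_nonneg _ _
    rw [← hDz]
    simp only [zero_mul, add_zero] at h ⊢
    exact h
  · have hle : ∀ c : ℝ, ((⨅ c : ℝ, ssNormSq s O (fun x => v x + c)) - 3 * K ^ 2 * A) / D ≤
        l2Sq O (fun x => v x + c) := by
      intro c
      rw [div_le_iff₀ hDpos]
      nlinarith [step c]
    have h6 : ((⨅ c : ℝ, ssNormSq s O (fun x => v x + c)) - 3 * K ^ 2 * A) / D ≤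
        ⨅ c : ℝ, l2Sq O (fun x => v x + c) := le_ciInf hle
    rw [div_le_iff₀ hDpos] at h6
    nlinarith [h6]

end
end

section
/- For a bounded Lipschitz domain O, s ∈ (0,1), and constants K (with ||v||_{s,O} ≤ K ||v||_{[L^2,H^1]_s} for all v ∈ H^s(O)), the full Sobolev-Slobodeckij norm is controlled by the L^2 norm and the interpolation seminorm: ||v||_{s,O}^2 ≤ (K^2/(s(1-s))) ||v||_{L^2(O)}^2 + 3 K^2 |v|_{[L^2(O),H^1(O)]_s}^2 for all v ∈ H^s(O). -/
open MeasureTheory Metric Set Bornology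
noncomputable section

variable {n : ℕ}

namespace Helper8

/-- K-functional with full `H¹` norm. -/
def Ffun (O : Set (Euc n)) (v : Euc n → ℝ) (t : ℝ) : ℝ :=
  ⨅ w : {w : Euc n → ℝ // memH1 O w},
    (l2Sq O (fun x => v x - w.1 x) + t ^ 2 * (l2Sq O w.1 + h1SemiSq O w.1))

/-- K-functional with `H¹` seminorm. -/
def Gfun (O : Set (Euc n)) (v : Euc n → ℝ) (t : ℝ) : ℝ :=
  ⨅ w : {w : Euc n → ℝ // memH1 O w},
    (l2Sq O (fun x => v x - w.1 x) + t ^ 2 * h1SemiSq O w.1)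

end Helper8

/-- the full Sobolev–Slobodeckij norm is controlled by the `L²` norm and
the interpolation seminorm: `‖v‖_{s,O}² ≤ (K²/(s(1-s))) ‖v‖_{L²}² + 3K² |v|_{[L²,H¹]_s}²`. -/
theorem ssNormSq_le_l2_interpSemi {n : ℕ} (O : Set (Euc n)) (hO : IsLipschitzDomain O)
    (s : ℝ) (hs : s ∈ Set.Ioo (0 : ℝ) 1) (K : ℝ)
    (hK : ∀ w : Euc n → ℝ, memHs s O w →
      Real.sqrt (ssNormSq s O w) ≤ K * Real.sqrt (interpNormSq s O w)) :
    ∀ v : Euc n → ℝ, memHs s O v →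
      ssNormSq s O v ≤ K ^ 2 / (s * (1 - s)) * l2Sq O v + 3 * K ^ 2 * interpSemiSq s O v := by
  obtain ⟨hs0, hs1⟩ := hs
  intro v hv
  -- the zero function is in `H¹(O)`
  have h0mem : memH1 O (fun _ : Euc n => (0 : ℝ)) := by
    refine ⟨MemLp.zero', differentiableOn_const 0, ?_⟩
    have hfd : (fun x : Euc n => ‖fderiv ℝ (fun _ : Euc n => (0 : ℝ)) x‖) = fun _ => (0 : ℝ) := by
      ext x; simp
    rw [hfd]; exact MemLp.zero'
  haveI : Nonempty {w : Euc n → ℝ // memH1 O w} := ⟨⟨_, h0mem⟩⟩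
  have hl2nn : ∀ u : Euc n → ℝ, 0 ≤ l2Sq O u := fun u => integral_nonneg fun x => sq_nonneg _
  have hh1nn : ∀ u : Euc n → ℝ, 0 ≤ h1SemiSq O u := fun u => integral_nonneg fun x => sq_nonneg _
  have hB0 : h1SemiSq O (fun _ : Euc n => (0 : ℝ)) = 0 := by
    have hfd : (fun x : Euc n => ‖fderiv ℝ (fun _ : Euc n => (0 : ℝ)) x‖ ^ 2)
        = fun _ => (0 : ℝ) := by ext x; simp
    unfold h1SemiSq
    rw [hfd]; simp
  have hbddG : ∀ t : ℝ, BddBelow (Set.range fun w : {w : Euc n → ℝ // memH1 O w} =>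
      l2Sq O (fun x => v x - w.1 x) + t ^ 2 * h1SemiSq O w.1) := by
    intro t
    refine ⟨0, ?_⟩
    rintro y ⟨w, rfl⟩
    exact add_nonneg (hl2nn _) (mul_nonneg (sq_nonneg t) (hh1nn _))
  have hbddF : ∀ t : ℝ, BddBelow (Set.range fun w : {w : Euc n → ℝ // memH1 O w} =>
      l2Sq O (fun x => v x - w.1 x) + t ^ 2 * (l2Sq O w.1 + h1SemiSq O w.1)) := by
    intro t
    refine ⟨0, ?_⟩
    rintro y ⟨w, rfl⟩
    exact add_nonneg (hl2nn _) (mul_nonneg (sq_nonneg t) (add_nonneg (hl2nn _) (hh1nn _)))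
  have hGnn : ∀ t : ℝ, 0 ≤ Helper8.Gfun O v t := fun t =>
    le_ciInf fun w => add_nonneg (hl2nn _) (mul_nonneg (sq_nonneg t) (hh1nn _))
  have hFnn : ∀ t : ℝ, 0 ≤ Helper8.Ffun O v t := fun t =>
    le_ciInf fun w =>
      add_nonneg (hl2nn _) (mul_nonneg (sq_nonneg t) (add_nonneg (hl2nn _) (hh1nn _)))
  have hGF : ∀ t : ℝ, Helper8.Gfun O v t ≤ Helper8.Ffun O v t := fun t =>
    ciInf_mono (hbddG t) fun w => by nlinarith [mul_nonneg (sq_nonneg t) (hl2nn w.1)]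
  have hGmono : MonotoneOn (Helper8.Gfun O v) (Set.Ioi (0 : ℝ)) := by
    intro t1 h1 t2 _ h12
    refine ciInf_mono (hbddG t1) fun w => ?_
    have ht2 : t1 ^ 2 ≤ t2 ^ 2 := pow_le_pow_left₀ (le_of_lt h1) h12 2
    nlinarith [mul_le_mul_of_nonneg_right ht2 (hh1nn w.1)]
  have hGmeas : AEMeasurable (Helper8.Gfun O v) (volume.restrict (Set.Ioi (0 : ℝ))) :=
    aemeasurable_restrict_of_monotoneOn measurableSet_Ioi hGmono
  have hrpowc : ContinuousOn (fun t : ℝ => t ^ (-2 * s - 1)) (Set.Ioi (0 : ℝ)) := fun x hx =>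
    (Real.continuousAt_rpow_const x _ (Or.inl (ne_of_gt hx))).continuousWithinAt
  have hrmeas : AEMeasurable (fun t : ℝ => t ^ (-2 * s - 1))
      (volume.restrict (Set.Ioi (0 : ℝ))) := hrpowc.aemeasurable measurableSet_Ioi
  have hGintSM : AEStronglyMeasurable (fun t : ℝ => t ^ (-2 * s - 1) * Helper8.Gfun O v t)
      (volume.restrict (Set.Ioi (0 : ℝ))) := (hrmeas.mul hGmeas).aestronglyMeasurable
  -- pointwise bound on the K-functionals
  have hFG : ∀ t ∈ Set.Ioi (0 : ℝ), Helper8.Ffun O v t ≤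
      3 * Helper8.Gfun O v t + 2 * min (t ^ 2) 1 * l2Sq O v := by
    intro t ht
    simp only [Set.mem_Ioi] at ht
    rcases le_or_gt t 1 with h1 | h1
    · have ht21 : t ^ 2 ≤ 1 := by nlinarith
      rw [min_eq_left ht21]
      have key : ∀ w : {w : Euc n → ℝ // memH1 O w},
          (Helper8.Ffun O v t - 2 * t ^ 2 * l2Sq O v) / 3 ≤
            l2Sq O (fun x => v x - w.1 x) + t ^ 2 * h1SemiSq O w.1 := by
        intro w
        have hFle : Helper8.Ffun O v t ≤
            l2Sq O (fun x => v x - w.1 x) + t ^ 2 * (l2Sq O w.1 + h1SemiSq O w.1) :=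
          ciInf_le (hbddF t) w
        have hw2 : l2Sq O w.1 ≤ 2 * l2Sq O (fun x => v x - w.1 x) + 2 * l2Sq O v := by
          have hint1 : Integrable (fun x => w.1 x ^ 2) (volume.restrict O) :=
            w.2.1.integrable_sq
          have hintv : Integrable (fun x => v x ^ 2) (volume.restrict O) :=
            hv.1.integrable_sq
          have hintd : Integrable (fun x => (v x - w.1 x) ^ 2) (volume.restrict O) :=
            (hv.1.sub w.2.1).integrable_sq
          have hmono : ∫ x in O, w.1 x ^ 2 ≤ ∫ x in O, (2 * (v x - w.1 x) ^ 2 + 2 * v x ^ 2) :=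
            integral_mono hint1 ((hintd.const_mul 2).add (hintv.const_mul 2))
              (fun x => by
                show w.1 x ^ 2 ≤ 2 * (v x - w.1 x) ^ 2 + 2 * v x ^ 2
                nlinarith [sq_nonneg (2 * v x - w.1 x)])
          rw [integral_add (hintd.const_mul 2) (hintv.const_mul 2),
            integral_const_mul, integral_const_mul] at hmono
          exact hmono
        have h2 := hl2nn (fun x => v x - w.1 x)
        have h3 := hh1nn w.1
        have h4 := hl2nn v
        have h5 := sq_nonneg t
        nlinarith [mul_le_mul_of_nonneg_left hw2 h5, mul_le_mul_of_nonneg_right ht21 h2]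
      have hGle : (Helper8.Ffun O v t - 2 * t ^ 2 * l2Sq O v) / 3 ≤ Helper8.Gfun O v t :=
        le_ciInf key
      linarith
    · have ht21 : (1 : ℝ) ≤ t ^ 2 := by nlinarith
      rw [min_eq_right ht21]
      have h0 : Helper8.Ffun O v t ≤
          l2Sq O (fun x => v x - (fun _ : Euc n => (0 : ℝ)) x) +
            t ^ 2 * (l2Sq O (fun _ : Euc n => (0 : ℝ)) + h1SemiSq O (fun _ : Euc n => (0 : ℝ))) :=
        ciInf_le (hbddF t) ⟨_, h0mem⟩
      have e1 : l2Sq O (fun x => v x - (fun _ : Euc n => (0 : ℝ)) x) = l2Sq O v := by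
        simp [l2Sq]
      have e2 : l2Sq O (fun _ : Euc n => (0 : ℝ)) = 0 := by simp [l2Sq]
      rw [e1, e2, hB0] at h0
      have hg := hGnn t
      have hl := hl2nn v
      nlinarith
  -- explicit integrals of `t ^ (-2s-1) * min (t², 1)`
  have he1 : (-1 : ℝ) < 1 - 2 * s := by linarith
  have he2 : (-2 * s - 1 : ℝ) < -1 := by linarith
  have heq1 : Set.EqOn (fun t : ℝ => t ^ (1 - 2 * s))
      (fun t : ℝ => t ^ (-2 * s - 1) * min (t ^ 2) 1) (Set.Ioc (0 : ℝ) 1) := by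
    intro t ht
    have ht0 : (0 : ℝ) < t := ht.1
    have hm : min (t ^ 2) 1 = t ^ 2 := min_eq_left (by nlinarith [ht.2])
    simp only
    rw [hm, show (t : ℝ) ^ 2 = t ^ (2 : ℝ) by rw [← Real.rpow_natCast t 2]; norm_num,
      ← Real.rpow_add ht0, show (-2 * s - 1) + 2 = 1 - 2 * s by ring]
  have heq2 : Set.EqOn (fun t : ℝ => t ^ (-2 * s - 1))
      (fun t : ℝ => t ^ (-2 * s - 1) * min (t ^ 2) 1) (Set.Ioi (1 : ℝ)) := by
    intro t ht
    have hm : min (t ^ 2) 1 = 1 := min_eq_right (by nlinarith [Set.mem_Ioi.1 ht])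
    simp only
    rw [hm, mul_one]
  have hI1 : IntegrableOn (fun t : ℝ => t ^ (-2 * s - 1) * min (t ^ 2) 1)
      (Set.Ioc (0 : ℝ) 1) := by
    have base : IntegrableOn (fun t : ℝ => t ^ (1 - 2 * s)) (Set.Ioc (0 : ℝ) 1) := by
      rw [← intervalIntegrable_iff_integrableOn_Ioc_of_le zero_le_one]
      exact intervalIntegral.intervalIntegrable_rpow' he1
    exact base.congr_fun heq1 measurableSet_Ioc
  have hI2 : IntegrableOn (fun t : ℝ => t ^ (-2 * s - 1) * min (t ^ 2) 1)
      (Set.Ioi (1 : ℝ)) :=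
    (integrableOn_Ioi_rpow_of_lt he2 one_pos).congr_fun heq2 measurableSet_Ioi
  have hImin : IntegrableOn (fun t : ℝ => t ^ (-2 * s - 1) * min (t ^ 2) 1)
      (Set.Ioi (0 : ℝ)) := by
    rw [← Set.Ioc_union_Ioi_eq_Ioi (zero_le_one (α := ℝ))]
    exact hI1.union hI2
  have hV1 : ∫ t in Set.Ioc (0 : ℝ) 1, t ^ (-2 * s - 1) * min (t ^ 2) 1 = 1 / (2 - 2 * s) := by
    rw [← setIntegral_congr_fun measurableSet_Ioc heq1,
      ← intervalIntegral.integral_of_le zero_le_one, integral_rpow (Or.inl he1),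
      Real.one_rpow, Real.zero_rpow (ne_of_gt (by linarith : (0 : ℝ) < 1 - 2 * s + 1)),
      show (1 - 2 * s + 1 : ℝ) = 2 - 2 * s by ring]
    norm_num
  have hV2 : ∫ t in Set.Ioi (1 : ℝ), t ^ (-2 * s - 1) * min (t ^ 2) 1 = 1 / (2 * s) := by
    rw [← setIntegral_congr_fun measurableSet_Ioi heq2,
      integral_Ioi_rpow_of_lt he2 one_pos,
      show (-2 * s - 1 + 1 : ℝ) = -(2 * s) by ring, Real.one_rpow, neg_div_neg_eq]
  have hVmin : ∫ t in Set.Ioi (0 : ℝ), t ^ (-2 * s - 1) * min (t ^ 2) 1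
      = 1 / (2 - 2 * s) + 1 / (2 * s) := by
    rw [← Set.Ioc_union_Ioi_eq_Ioi (zero_le_one (α := ℝ)),
      setIntegral_union (Set.Ioc_disjoint_Ioi le_rfl) measurableSet_Ioi hI1 hI2, hV1, hV2]
  -- identification of the interpolation integrals
  have hIN : interpNormSq s O v
      = ∫ t in Set.Ioi (0 : ℝ), t ^ (-2 * s - 1) * Helper8.Ffun O v t := rfl
  have hIS : interpSemiSq s O v
      = ∫ t in Set.Ioi (0 : ℝ), t ^ (-2 * s - 1) * Helper8.Gfun O v t := rfl
  have hISnn : 0 ≤ interpSemiSq s O v := by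
    rw [hIS]
    exact setIntegral_nonneg measurableSet_Ioi fun t ht =>
      mul_nonneg (Real.rpow_nonneg (le_of_lt ht) _) (hGnn t)
  have hssnn : 0 ≤ ssNormSq s O v := by
    have hsl : 0 ≤ slobSq s O v :=
      integral_nonneg fun x => integral_nonneg fun y =>
        div_nonneg (pow_nonneg (abs_nonneg _) 2) (Real.rpow_nonneg (norm_nonneg _) _)
    exact add_nonneg (hl2nn v) hsl
  have hRHSaux : 0 ≤ K ^ 2 / (s * (1 - s)) * l2Sq O v + 3 * K ^ 2 * interpSemiSq s O v := by
    have hd : 0 ≤ K ^ 2 / (s * (1 - s)) :=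
      div_nonneg (sq_nonneg K) (by nlinarith)
    have hl := hl2nn v
    nlinarith [sq_nonneg K, hISnn, mul_nonneg hd hl]
  by_cases hGint : Integrable (fun t : ℝ => t ^ (-2 * s - 1) * Helper8.Gfun O v t)
      (volume.restrict (Set.Ioi (0 : ℝ)))
  · -- integrable case
    have hg : Integrable (fun t : ℝ =>
        3 * (t ^ (-2 * s - 1) * Helper8.Gfun O v t) +
          (2 * l2Sq O v) * (t ^ (-2 * s - 1) * min (t ^ 2) 1))
        (volume.restrict (Set.Ioi (0 : ℝ))) :=
      (hGint.const_mul 3).add (hImin.const_mul (2 * l2Sq O v))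
    have hnn : (0 : ℝ → ℝ) ≤ᵐ[volume.restrict (Set.Ioi (0 : ℝ))]
        fun t => t ^ (-2 * s - 1) * Helper8.Ffun O v t := by
      filter_upwards [self_mem_ae_restrict measurableSet_Ioi] with t ht
      exact mul_nonneg (Real.rpow_nonneg (le_of_lt ht) _) (hFnn t)
    have hptle : (fun t : ℝ => t ^ (-2 * s - 1) * Helper8.Ffun O v t)
        ≤ᵐ[volume.restrict (Set.Ioi (0 : ℝ))]
        fun t => 3 * (t ^ (-2 * s - 1) * Helper8.Gfun O v t) +
          (2 * l2Sq O v) * (t ^ (-2 * s - 1) * min (t ^ 2) 1) := by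
      filter_upwards [self_mem_ae_restrict measurableSet_Ioi] with t ht
      have h0 : 0 ≤ t ^ (-2 * s - 1) := Real.rpow_nonneg (le_of_lt ht) _
      have hb := hFG t ht
      calc t ^ (-2 * s - 1) * Helper8.Ffun O v t
          ≤ t ^ (-2 * s - 1) * (3 * Helper8.Gfun O v t + 2 * min (t ^ 2) 1 * l2Sq O v) :=
            mul_le_mul_of_nonneg_left hb h0
        _ = 3 * (t ^ (-2 * s - 1) * Helper8.Gfun O v t) +
            (2 * l2Sq O v) * (t ^ (-2 * s - 1) * min (t ^ 2) 1) := by ring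
    have hsplit : ∫ t in Set.Ioi (0 : ℝ),
        (3 * (t ^ (-2 * s - 1) * Helper8.Gfun O v t) +
          (2 * l2Sq O v) * (t ^ (-2 * s - 1) * min (t ^ 2) 1))
        = 3 * (∫ t in Set.Ioi (0 : ℝ), t ^ (-2 * s - 1) * Helper8.Gfun O v t) +
          (2 * l2Sq O v) * (1 / (2 - 2 * s) + 1 / (2 * s)) := by
      rw [integral_add (hGint.const_mul 3) (hImin.const_mul (2 * l2Sq O v)),
        integral_const_mul, integral_const_mul, hVmin]
    have hle : interpNormSq s O v ≤
        3 * interpSemiSq s O v + (2 * l2Sq O v) * (1 / (2 - 2 * s) + 1 / (2 * s)) := by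
      rw [hIN, hIS]
      have hmono := integral_mono_of_nonneg hnn hg hptle
      rw [hsplit] at hmono
      exact hmono
    have hINnn : 0 ≤ interpNormSq s O v := by
      rw [hIN]
      exact setIntegral_nonneg measurableSet_Ioi fun t ht =>
        mul_nonneg (Real.rpow_nonneg (le_of_lt ht) _) (hFnn t)
    have hsq : ssNormSq s O v ≤ K ^ 2 * interpNormSq s O v := by
      have h := hK v hv
      calc ssNormSq s O v = Real.sqrt (ssNormSq s O v) ^ 2 := (Real.sq_sqrt hssnn).symm
        _ ≤ (K * Real.sqrt (interpNormSq s O v)) ^ 2 :=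
            pow_le_pow_left₀ (Real.sqrt_nonneg _) h 2
        _ = K ^ 2 * interpNormSq s O v := by rw [mul_pow, Real.sq_sqrt hINnn]
    have hs0' : s ≠ 0 := ne_of_gt hs0
    have h1s : (1 : ℝ) - s ≠ 0 := ne_of_gt (by linarith)
    have h2s : (2 - 2 * s : ℝ) ≠ 0 := ne_of_gt (by linarith)
    have hfinal : K ^ 2 * (3 * interpSemiSq s O v +
        (2 * l2Sq O v) * (1 / (2 - 2 * s) + 1 / (2 * s)))
        = K ^ 2 / (s * (1 - s)) * l2Sq O v + 3 * K ^ 2 * interpSemiSq s O v := by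
      field_simp
      ring
    calc ssNormSq s O v ≤ K ^ 2 * interpNormSq s O v := hsq
      _ ≤ K ^ 2 * (3 * interpSemiSq s O v +
          (2 * l2Sq O v) * (1 / (2 - 2 * s) + 1 / (2 * s))) :=
          mul_le_mul_of_nonneg_left hle (sq_nonneg K)
      _ = _ := hfinal
  · -- non-integrable case: the interpolation norm integral is (by convention) zero
    have hFnotint : ¬ Integrable (fun t : ℝ => t ^ (-2 * s - 1) * Helper8.Ffun O v t)
        (volume.restrict (Set.Ioi (0 : ℝ))) := by
      intro hF
      apply hGint
      refine hF.mono' hGintSM ?_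
      filter_upwards [self_mem_ae_restrict measurableSet_Ioi] with t ht
      have h0 : 0 ≤ t ^ (-2 * s - 1) := Real.rpow_nonneg (le_of_lt ht) _
      have hG0 : 0 ≤ t ^ (-2 * s - 1) * Helper8.Gfun O v t := mul_nonneg h0 (hGnn t)
      rw [Real.norm_eq_abs, abs_of_nonneg hG0]
      exact mul_le_mul_of_nonneg_left (hGF t) h0
    have hIN0 : interpNormSq s O v = 0 := by
      rw [hIN]; exact integral_undef hFnotint
    have h := hK v hv
    rw [hIN0, Real.sqrt_zero, mul_zero] at h
    have hss0 : ssNormSq s O v ≤ 0 :=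
      Real.sqrt_eq_zero'.1 (le_antisymm h (Real.sqrt_nonneg _))
    linarith

end
end

section
/- Transformation of the scalable H̃^s interpolation norm under affine maps: with O = F(Ô), F(x̂)=x0+Bx̂, B invertible, v̂ = v∘F, and s ∈ (0,1), one has |det B| ||B||^{-2s} ||v̂||_{[L^2(Ô),H^1_0(Ô)]_s}^2 ≤ ||v||_{[L^2(O),H^1_0(O)]_s}^2 ≤ |det B| ||B^{-1}||^{2s} ||v̂||_{[L^2(Ô),H^1_0(Ô)]_s}^2. -/
open MeasureTheory Metric Set Bornology
noncomputable section

variable {n : ℕ}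

namespace AT
variable {n : ℕ} (x0 : Euc n) (B : Euc n ≃L[ℝ] Euc n)

lemma det_ne : LinearMap.det (B.toLinearEquiv.toLinearMap) ≠ 0 :=
  (LinearEquiv.isUnit_det' B.toLinearEquiv).ne_zero

lemma absDet_pos : 0 < absDet B := abs_pos.2 (det_ne B)

lemma absDet_symm : absDet B.symm = (absDet B)⁻¹ := by
  have h : (B.toLinearEquiv.toLinearMap).comp (B.symm.toLinearEquiv.toLinearMap)
      = LinearMap.id := by
    ext x; simp
  have := LinearMap.det_comp (B.toLinearEquiv.toLinearMap) (B.symm.toLinearEquiv.toLinearMap)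
  rw [h, LinearMap.det_id] at this
  have h2 : LinearMap.det (B.symm.toLinearEquiv.toLinearMap)
      = (LinearMap.det (B.toLinearEquiv.toLinearMap))⁻¹ :=
    eq_inv_of_mul_eq_one_left (by rw [mul_comm] at this; exact this.symm)
  rw [absDet, absDet, h2, abs_inv]

/-- the affine map as a homeomorphism -/
def hom : Euc n ≃ₜ Euc n := (B.toHomeomorph).trans (Homeomorph.addLeft x0)

def meq : Euc n ≃ᵐ Euc n := (hom x0 B).toMeasurableEquiv

lemma map_vol : Measure.map (fun y => x0 + B y) (volume : Measure (Euc n)) =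
    ENNReal.ofReal (absDet B)⁻¹ • volume := by
  have h1 : Measure.map (fun y : Euc n => (B y : Euc n)) volume =
      ENNReal.ofReal |(LinearMap.det (B.toLinearEquiv.toLinearMap))⁻¹| • volume :=
    Measure.map_linearMap_addHaar_eq_smul_addHaar volume (det_ne B)
  have h2 : (fun y : Euc n => x0 + B y) = (fun z : Euc n => x0 + z) ∘ (fun y : Euc n => B y) := rfl
  rw [h2, ← Measure.map_map (measurable_const_add x0) (B.continuous.measurable), h1]
  rw [Measure.map_smul,
    Measure.IsAddLeftInvariant.map_add_left_eq_self (μ := (volume : Measure (Euc n))) x0, abs_inv]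
  rfl

lemma preimage_image (U : Set (Euc n)) : (fun y => x0 + B y) ⁻¹' ((fun y => x0 + B y) '' U) = U :=
  (meq x0 B).injective.preimage_image U

lemma map_restrict (U : Set (Euc n)) (hV : MeasurableSet ((fun y => x0 + B y) '' U)) :
    Measure.map (fun y => x0 + B y) (volume.restrict U) =
      ENNReal.ofReal (absDet B)⁻¹ • volume.restrict ((fun y => x0 + B y) '' U) := by
  have := Measure.restrict_map (f := fun y => x0 + B y) (μ := (volume : Measure (Euc n)))
    ((meq x0 B).measurable) hV
  rw [preimage_image] at this
  rw [← this, map_vol, Measure.restrict_smul]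

lemma setIntegral_image {E : Type*} [NormedAddCommGroup E] [NormedSpace ℝ E]
    (U : Set (Euc n)) (hV : MeasurableSet ((fun y => x0 + B y) '' U)) (g : Euc n → E) :
    ∫ x in (fun y => x0 + B y) '' U, g x = absDet B • ∫ y in U, g (x0 + B y) := by
  have h1 : ∫ y in U, g (x0 + B y) = ∫ x, g x ∂(Measure.map (fun y => x0 + B y)
      (volume.restrict U)) := by
    have := MeasureTheory.integral_map_equiv (e := meq x0 B) (f := g) (μ := volume.restrict U)
    exact this.symm
  rw [h1, map_restrict _ _ _ hV, integral_smul_measure, ENNReal.toReal_ofReal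
    (inv_nonneg.2 (absDet_pos B).le), ← smul_assoc, smul_eq_mul,
    mul_inv_cancel₀ (absDet_pos B).ne', one_smul]

lemma l2Sq_nonneg (O : Set (Euc n)) (v : Euc n → ℝ) : 0 ≤ l2Sq O v :=
  integral_nonneg (fun _ => sq_nonneg _)

lemma h1SemiSq_nonneg (O : Set (Euc n)) (w : Euc n → ℝ) : 0 ≤ h1SemiSq O w :=
  integral_nonneg (fun _ => sq_nonneg _)

lemma l2Sq_image (U : Set (Euc n)) (hV : MeasurableSet ((fun y => x0 + B y) '' U))
    (v : Euc n → ℝ) :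
    l2Sq ((fun y => x0 + B y) '' U) v = absDet B * l2Sq U (fun y => v (x0 + B y)) := by
  have := setIntegral_image x0 B U hV (fun x => v x ^ 2)
  simpa [l2Sq, smul_eq_mul] using this

lemma memℒp_comp (U : Set (Euc n)) (hV : MeasurableSet ((fun y => x0 + B y) '' U))
    (g : Euc n → ℝ) (p : ENNReal)
    (hg : MemLp g p (volume.restrict ((fun y => x0 + B y) '' U))) :
    MemLp (fun y => g (x0 + B y)) p (volume.restrict U) := by
  have hsm : MemLp g p (ENNReal.ofReal (absDet B)⁻¹ • volume.restrict ((fun y => x0 + B y) '' U)) :=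
    hg.smul_measure ENNReal.ofReal_ne_top
  rw [← map_restrict x0 B U hV] at hsm
  have hemb : MeasurableEmbedding (fun y : Euc n => x0 + B y) :=
    (meq x0 B).measurableEmbedding
  exact (hemb.memLp_map_measure_iff).1 hsm

lemma fderiv_comp_affine {w : Euc n → ℝ} {y : Euc n}
    (hw : DifferentiableAt ℝ w (x0 + B y)) :
    fderiv ℝ (fun z => w (x0 + B z)) y
      = (fderiv ℝ w (x0 + B y)).comp (B : Euc n →L[ℝ] Euc n) := by
  have hF : HasFDerivAt (fun z : Euc n => x0 + B z) (B : Euc n →L[ℝ] Euc n) y :=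
    ((B : Euc n →L[ℝ] Euc n).hasFDerivAt).const_add x0
  exact (hw.hasFDerivAt.comp y hF).fderiv

lemma norm_fderiv_comp_le {w : Euc n → ℝ} {y : Euc n}
    (hw : DifferentiableAt ℝ w (x0 + B y)) :
    ‖fderiv ℝ (fun z => w (x0 + B z)) y‖ ≤ opN B * ‖fderiv ℝ w (x0 + B y)‖ := by
  rw [fderiv_comp_affine x0 B hw]
  exact (ContinuousLinearMap.opNorm_comp_le _ _).trans_eq (mul_comm _ _)

lemma mem_image_of_mem' {U : Set (Euc n)} {y : Euc n} (hy : y ∈ U) :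
    x0 + B y ∈ (fun y => x0 + B y) '' U := ⟨y, hy, rfl⟩

lemma h1SemiSq_comp_le (U : Set (Euc n)) (hU : IsOpen U)
    (w : Euc n → ℝ) (hw : DifferentiableOn ℝ w ((fun y => x0 + B y) '' U))
    (hint : Integrable (fun y => ‖fderiv ℝ w (x0 + B y)‖ ^ 2) (volume.restrict U)) :
    h1SemiSq U (fun y => w (x0 + B y)) ≤
      opN B ^ 2 * ((absDet B)⁻¹ * h1SemiSq ((fun y => x0 + B y) '' U) w) := by
  have hVopen : IsOpen ((fun y => x0 + B y) '' U) :=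
    ((B.toHomeomorph).trans (Homeomorph.addLeft x0)).isOpenMap U hU
  have hstep : h1SemiSq U (fun y => w (x0 + B y)) ≤
      ∫ y in U, opN B ^ 2 * ‖fderiv ℝ w (x0 + B y)‖ ^ 2 := by
    refine integral_mono_of_nonneg (Filter.Eventually.of_forall fun y => sq_nonneg _)
      (hint.const_mul _) ?_
    filter_upwards [ae_restrict_mem hU.measurableSet] with y hy
    have hdiff : DifferentiableAt ℝ w (x0 + B y) :=
      (hw (x0 + B y) (mem_image_of_mem' x0 B hy)).differentiableAt
        (hVopen.mem_nhds (mem_image_of_mem' x0 B hy))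
    calc ‖fderiv ℝ (fun z => w (x0 + B z)) y‖ ^ 2
        ≤ (opN B * ‖fderiv ℝ w (x0 + B y)‖) ^ 2 := by
          apply pow_le_pow_left₀ (norm_nonneg _) (norm_fderiv_comp_le x0 B hdiff)
      _ = opN B ^ 2 * ‖fderiv ℝ w (x0 + B y)‖ ^ 2 := by ring
  have heq : ∫ y in U, opN B ^ 2 * ‖fderiv ℝ w (x0 + B y)‖ ^ 2
      = opN B ^ 2 * ((absDet B)⁻¹ * h1SemiSq ((fun y => x0 + B y) '' U) w) := by
    rw [integral_const_mul]
    congr 1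
    have := setIntegral_image x0 B U hVopen.measurableSet (fun x => ‖fderiv ℝ w x‖ ^ 2)
    rw [h1SemiSq, this, smul_eq_mul, ← mul_assoc, inv_mul_cancel₀ (absDet_pos B).ne', one_mul]
  exact hstep.trans_eq heq

section
variable (U : Set (Euc n))

lemma isOpen_image (hU : IsOpen U) : IsOpen ((fun y => x0 + B y) '' U) :=
  (hom x0 B).isOpenMap U hU

lemma diffOn_comp (hU : IsOpen U) (w : Euc n → ℝ)
    (hw : DifferentiableOn ℝ w ((fun y => x0 + B y) '' U)) :
    DifferentiableOn ℝ (fun y => w (x0 + B y)) U := by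
  intro y hy
  have hdiff : DifferentiableAt ℝ w (x0 + B y) :=
    (hw _ (mem_image_of_mem' x0 B hy)).differentiableAt
      ((isOpen_image x0 B U hU).mem_nhds (mem_image_of_mem' x0 B hy))
  have hF : DifferentiableAt ℝ (fun z : Euc n => x0 + B z) y :=
    (((B : Euc n →L[ℝ] Euc n).hasFDerivAt).const_add x0).differentiableAt
  exact (hdiff.comp y hF).differentiableWithinAt

lemma memℒp_norm_fderiv_comp (hU : IsOpen U) (w : Euc n → ℝ)
    (hw : DifferentiableOn ℝ w ((fun y => x0 + B y) '' U))
    (hmem : MemLp (fun x => ‖fderiv ℝ w x‖) 2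
      (volume.restrict ((fun y => x0 + B y) '' U))) :
    MemLp (fun y => ‖fderiv ℝ (fun z => w (x0 + B z)) y‖) 2 (volume.restrict U) := by
  have hVopen := isOpen_image x0 B U hU
  have hg : MemLp (fun y => opN B * ‖fderiv ℝ w (x0 + B y)‖) 2 (volume.restrict U) :=
    (memℒp_comp x0 B U hVopen.measurableSet _ 2 hmem).const_mul (opN B)
  refine MemLp.of_le hg ((measurable_fderiv ℝ _).norm).aestronglyMeasurable ?_
  filter_upwards [ae_restrict_mem hU.measurableSet] with y hy
  have hdiff : DifferentiableAt ℝ w (x0 + B y) :=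
    (hw _ (mem_image_of_mem' x0 B hy)).differentiableAt
      (hVopen.mem_nhds (mem_image_of_mem' x0 B hy))
  have h1 := norm_fderiv_comp_le x0 B hdiff
  have h2 : (0:ℝ) ≤ opN B * ‖fderiv ℝ w (x0 + B y)‖ :=
    mul_nonneg (norm_nonneg _) (norm_nonneg _)
  have h3 : |opN B| = opN B := abs_of_nonneg (norm_nonneg _)
  simpa [Real.norm_eq_abs, abs_of_nonneg (norm_nonneg _), abs_of_nonneg h2, h3] using h1

lemma memH1_comp (hU : IsOpen U) (w : Euc n → ℝ)
    (hw : memH1 ((fun y => x0 + B y) '' U) w) :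
    memH1 U (fun y => w (x0 + B y)) := by
  refine ⟨memℒp_comp x0 B U (isOpen_image x0 B U hU).measurableSet w 2 hw.1,
    diffOn_comp x0 B U hU w hw.2.1, memℒp_norm_fderiv_comp x0 B U hU w hw.2.1 hw.2.2⟩

lemma hom_eq : ⇑(hom x0 B) = fun y => x0 + B y := rfl

lemma preimage_image' : (fun y => x0 + B y) ⁻¹' ((fun y => x0 + B y) '' U) = U :=
  (hom x0 B).injective.preimage_image U

lemma image_isBounded (hUb : IsBounded U) :
    IsBounded ((fun y => x0 + B y) '' U) := by
  have h1 : IsCompact ((fun y => x0 + B y) '' closure U) :=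
    (hUb.isCompact_closure).image (hom x0 B).continuous
  exact h1.isBounded.subset (image_mono subset_closure)

lemma memℒp_restrict_of_compact_support {f : Euc n → ℝ} (hf : Continuous f)
    (hsupp : HasCompactSupport f) (V : Set (Euc n)) (p : ENNReal) :
    MemLp f p (volume.restrict V) :=
  (hf.memLp_of_hasCompactSupport (μ := volume) hsupp).restrict V

lemma memℒp_norm_fderiv_sub (V : Set (Euc n)) (hV : IsOpen V) (w φ : Euc n → ℝ)
    (hwd : DifferentiableOn ℝ w V)
    (hwm : MemLp (fun x => ‖fderiv ℝ w x‖) 2 (volume.restrict V))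
    (hφ : ContDiff ℝ (⊤ : ℕ∞) φ) (hφc : HasCompactSupport φ) :
    MemLp (fun x => ‖fderiv ℝ (fun z => w z - φ z) x‖) 2 (volume.restrict V) := by
  have hφm : MemLp (fun x => ‖fderiv ℝ φ x‖) 2 (volume.restrict V) :=
    memℒp_restrict_of_compact_support ((hφ.continuous_fderiv (by simp)).norm)
      ((hφc.fderiv (𝕜 := ℝ)).norm) V 2
  refine MemLp.of_le (hwm.add hφm) ((measurable_fderiv ℝ _).norm).aestronglyMeasurable ?_
  filter_upwards [ae_restrict_mem hV.measurableSet] with x hx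
  have hdw : DifferentiableAt ℝ w x := (hwd x hx).differentiableAt (hV.mem_nhds hx)
  have hdφ : DifferentiableAt ℝ φ x := (hφ.differentiable (by simp)).differentiableAt
  have h1 : fderiv ℝ (fun z => w z - φ z) x = fderiv ℝ w x - fderiv ℝ φ x :=
    fderiv_sub hdw hdφ
  have h2 : ‖fderiv ℝ (fun z => w z - φ z) x‖ ≤ ‖fderiv ℝ w x‖ + ‖fderiv ℝ φ x‖ := by
    rw [h1]; exact norm_sub_le _ _
  have h3 : (0:ℝ) ≤ ‖fderiv ℝ w x‖ + ‖fderiv ℝ φ x‖ :=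
    add_nonneg (norm_nonneg _) (norm_nonneg _)
  simpa [Real.norm_eq_abs, abs_of_nonneg (norm_nonneg _), abs_of_nonneg h3] using h2

lemma memH10_comp (hU : IsOpen U) (hUb : IsBounded U) (w : Euc n → ℝ)
    (hw : memH10 ((fun y => x0 + B y) '' U) w) :
    memH10 U (fun y => w (x0 + B y)) := by
  have hVopen := isOpen_image x0 B U hU
  obtain ⟨hw1, φ, hφ, htend⟩ := hw
  refine ⟨memH1_comp x0 B U hU w hw1, fun k y => φ k (x0 + B y), fun k => ?_, ?_⟩
  · obtain ⟨hφ1, hφ2, hφ3⟩ := hφ k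
    refine ⟨?_, ?_, ?_⟩
    · exact hφ1.comp (contDiff_const.add ((B : Euc n →L[ℝ] Euc n).contDiff))
    · exact hφ2.comp_homeomorph (hom x0 B)
    · have h1 : Function.support (fun y => φ k (x0 + B y))
          = (fun y => x0 + B y) ⁻¹' Function.support (φ k) :=
        Function.support_comp_eq_preimage (φ k) _
      have h2 : tsupport (fun y => φ k (x0 + B y))
          = (fun y => x0 + B y) ⁻¹' tsupport (φ k) := by
        rw [tsupport, h1, tsupport, ← hom_eq, ← Homeomorph.preimage_closure]
      rw [h2, ← preimage_image' x0 B U]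
      exact preimage_mono hφ3
  · set d := absDet B with hd
    have hdpos := absDet_pos B
    set C : ℝ := max d⁻¹ (opN B ^ 2 * d⁻¹) with hC
    have hCnn : 0 ≤ C := le_trans (inv_nonneg.2 hdpos.le) (le_max_left _ _)
    have key : ∀ k,
        l2Sq U (fun y => w (x0 + B y) - φ k (x0 + B y))
          + h1SemiSq U (fun y => w (x0 + B y) - φ k (x0 + B y))
        ≤ C * (l2Sq ((fun y => x0 + B y) '' U) (fun x => w x - φ k x)
            + h1SemiSq ((fun y => x0 + B y) '' U) (fun x => w x - φ k x)) := by
      intro k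
      obtain ⟨hφ1, hφ2, hφ3⟩ := hφ k
      set ω : Euc n → ℝ := fun x => w x - φ k x with hω
      have hωd : DifferentiableOn ℝ ω ((fun y => x0 + B y) '' U) :=
        hw1.2.1.sub ((hφ1.differentiable (by simp)).differentiableOn)
      have hωm : MemLp (fun x => ‖fderiv ℝ ω x‖) 2
          (volume.restrict ((fun y => x0 + B y) '' U)) :=
        memℒp_norm_fderiv_sub _ hVopen w (φ k) hw1.2.1 hw1.2.2 hφ1 hφ2
      have hint : Integrable (fun y => ‖fderiv ℝ ω (x0 + B y)‖ ^ 2)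
          (volume.restrict U) :=
        (memℒp_comp x0 B U hVopen.measurableSet _ 2 hωm).integrable_sq
      have hl2 : l2Sq U (fun y => ω (x0 + B y)) = d⁻¹ * l2Sq ((fun y => x0 + B y) '' U) ω := by
        rw [l2Sq_image x0 B U hVopen.measurableSet ω, ← mul_assoc,
          inv_mul_cancel₀ hdpos.ne', one_mul]
      have hh1 := h1SemiSq_comp_le x0 B U hU ω hωd hint
      have e1 : l2Sq U (fun y => ω (x0 + B y))
          ≤ C * l2Sq ((fun y => x0 + B y) '' U) ω := by
        rw [hl2]
        exact mul_le_mul_of_nonneg_right (le_max_left _ _)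
          (l2Sq_nonneg _ _)
      have e2 : h1SemiSq U (fun y => ω (x0 + B y))
          ≤ C * h1SemiSq ((fun y => x0 + B y) '' U) ω := by
        refine hh1.trans ?_
        rw [← mul_assoc]
        exact mul_le_mul_of_nonneg_right (le_max_right _ _) (h1SemiSq_nonneg _ _)
      calc l2Sq U (fun y => ω (x0 + B y)) + h1SemiSq U (fun y => ω (x0 + B y))
          ≤ C * l2Sq ((fun y => x0 + B y) '' U) ω
            + C * h1SemiSq ((fun y => x0 + B y) '' U) ω := add_le_add e1 e2
        _ = C * (l2Sq ((fun y => x0 + B y) '' U) ω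
            + h1SemiSq ((fun y => x0 + B y) '' U) ω) := by ring
    have hnn : ∀ k, 0 ≤
        l2Sq U (fun y => w (x0 + B y) - φ k (x0 + B y))
          + h1SemiSq U (fun y => w (x0 + B y) - φ k (x0 + B y)) :=
      fun _ => add_nonneg (l2Sq_nonneg _ _) (h1SemiSq_nonneg _ _)
    have htend' : Filter.Tendsto (fun k =>
        C * (l2Sq ((fun y => x0 + B y) '' U) (fun x => w x - φ k x)
          + h1SemiSq ((fun y => x0 + B y) '' U) (fun x => w x - φ k x)))
        Filter.atTop (nhds 0) := by
      have := htend.const_mul C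
      simpa using this
    exact squeeze_zero hnn key htend'
end

lemma memH10_zero (O : Set (Euc n)) : memH10 O (fun _ => (0:ℝ)) := by
  have hf : (fun x : Euc n => ‖fderiv ℝ (fun _ : Euc n => (0:ℝ)) x‖) = fun _ => (0:ℝ) := by
    funext x; simp [fderiv_const]
  refine ⟨⟨?_, differentiableOn_const 0, ?_⟩, fun _ _ => 0, fun k => ⟨contDiff_const, ?_, ?_⟩, ?_⟩
  · simpa using (zero_memLp : MemLp (0 : Euc n → ℝ) 2 (volume.restrict O))
  · rw [hf]; simpa using (zero_memLp : MemLp (0 : Euc n → ℝ) 2 (volume.restrict O))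
  · have : tsupport (fun _ : Euc n => (0:ℝ)) = ∅ := by
      have h0 : Function.support (fun _ : Euc n => (0:ℝ)) = ∅ := Function.support_eq_empty_iff.2 rfl
      rw [tsupport, h0, closure_empty]
    rw [HasCompactSupport, this]; exact isCompact_empty
  · have : tsupport (fun _ : Euc n => (0:ℝ)) = ∅ := by
      have h0 : Function.support (fun _ : Euc n => (0:ℝ)) = ∅ := Function.support_eq_empty_iff.2 rfl
      rw [tsupport, h0, closure_empty]
    rw [this]; exact empty_subset O
  · have h1 : (fun _ : ℕ => l2Sq O (fun _ => (0:ℝ) - 0) + h1SemiSq O (fun _ => (0:ℝ) - 0))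
      = fun _ => (0:ℝ) := by
      funext k
      have e1 : l2Sq O (fun _ : Euc n => (0:ℝ) - 0) = 0 := by
        simp [l2Sq]
      have e2 : h1SemiSq O (fun _ : Euc n => (0:ℝ) - 0) = 0 := by
        simp [h1SemiSq, fderiv_const]
      rw [e1, e2, add_zero]
    rw [h1]; exact tendsto_const_nhds

instance instNonemptyH10 (O : Set (Euc n)) : Nonempty {w : Euc n → ℝ // memH10 O w} :=
  ⟨⟨fun _ => 0, memH10_zero O⟩⟩

lemma kinf_bddBelow (O : Set (Euc n)) (v : Euc n → ℝ) (t : ℝ) :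
    BddBelow (Set.range fun w : {w : Euc n → ℝ // memH10 O w} =>
      l2Sq O (fun x => v x - w.1 x) + t ^ 2 * h1SemiSq O w.1) := by
  refine ⟨0, fun r hr => ?_⟩
  obtain ⟨w, rfl⟩ := hr
  exact add_nonneg (l2Sq_nonneg _ _) (mul_nonneg (sq_nonneg t) (h1SemiSq_nonneg _ _))

lemma kinf_nonneg (O : Set (Euc n)) (v : Euc n → ℝ) (t : ℝ) :
    0 ≤ ⨅ w : {w : Euc n → ℝ // memH10 O w},
      (l2Sq O (fun x => v x - w.1 x) + t ^ 2 * h1SemiSq O w.1) :=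
  Real.iInf_nonneg fun _ =>
    add_nonneg (l2Sq_nonneg _ _) (mul_nonneg (sq_nonneg t) (h1SemiSq_nonneg _ _))

lemma kinf_le (U V : Set (Euc n)) (hU : IsOpen U) (hUb : IsBounded U)
    (hV : V = (fun y => x0 + B y) '' U) (v : Euc n → ℝ) (t : ℝ) :
    (⨅ w : {w : Euc n → ℝ // memH10 V w},
        (l2Sq V (fun x => v x - w.1 x) + t ^ 2 * h1SemiSq V w.1))
      ≤ absDet B *
        ⨅ w : {w : Euc n → ℝ // memH10 U w},
          (l2Sq U (fun y => v (x0 + B y) - w.1 y)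
            + (opN B.symm * t) ^ 2 * h1SemiSq U w.1) := by
  have hdpos := absDet_pos B
  have hVopen : IsOpen V := hV ▸ isOpen_image x0 B U hU
  have hVb : IsBounded V := hV ▸ image_isBounded x0 B U hUb
  have hGV : (fun x => -B.symm x0 + B.symm x) '' V = U := by
    rw [hV, ← Set.image_comp]
    have : ((fun x : Euc n => -B.symm x0 + B.symm x) ∘ fun y => x0 + B y) = id := by
      funext y; simp
    rw [this, Set.image_id]
  rw [← inv_mul_le_iff₀ hdpos]
  refine le_ciInf fun wh => ?_
  rw [inv_mul_le_iff₀ hdpos]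
  have hmem : memH10 V (fun x => wh.1 (-B.symm x0 + B.symm x)) := by
    refine memH10_comp (-B.symm x0) B.symm V hVopen hVb wh.1 ?_
    rw [hGV]; exact wh.2
  have hle := ciInf_le (kinf_bddBelow V v t) ⟨_, hmem⟩
  refine hle.trans ?_
  have hl2 : l2Sq V (fun x => v x - wh.1 (-B.symm x0 + B.symm x))
      = absDet B * l2Sq U (fun y => v (x0 + B y) - wh.1 y) := by
    rw [hV, l2Sq_image x0 B U (hV ▸ hVopen.measurableSet)]
    congr 1
    have : (fun y => v (x0 + B y) - wh.1 (-B.symm x0 + B.symm (x0 + B y)))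
        = fun y => v (x0 + B y) - wh.1 y := by
      funext y; simp
    rw [this]
  have hh1 : h1SemiSq V (fun x => wh.1 (-B.symm x0 + B.symm x))
      ≤ opN B.symm ^ 2 * (absDet B * h1SemiSq U wh.1) := by
    have hdiff : DifferentiableOn ℝ wh.1 ((fun x => -B.symm x0 + B.symm x) '' V) := by
      rw [hGV]; exact wh.2.1.2.1
    have hintm : MemLp (fun x => ‖fderiv ℝ wh.1 x‖) 2
        (volume.restrict ((fun x => -B.symm x0 + B.symm x) '' V)) := by
      rw [hGV]; exact wh.2.1.2.2
    have hint : Integrable (fun x => ‖fderiv ℝ wh.1 (-B.symm x0 + B.symm x)‖ ^ 2)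
        (volume.restrict V) :=
      (memℒp_comp (-B.symm x0) B.symm V (by rw [hGV]; exact hU.measurableSet) _ 2
        hintm).integrable_sq
    have h := h1SemiSq_comp_le (-B.symm x0) B.symm V hVopen wh.1 hdiff hint
    rw [hGV] at h
    refine h.trans ?_
    rw [absDet_symm, inv_inv]
  calc l2Sq V (fun x => v x - wh.1 (-B.symm x0 + B.symm x))
        + t ^ 2 * h1SemiSq V (fun x => wh.1 (-B.symm x0 + B.symm x))
      ≤ absDet B * l2Sq U (fun y => v (x0 + B y) - wh.1 y)
        + t ^ 2 * (opN B.symm ^ 2 * (absDet B * h1SemiSq U wh.1)) := by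
        refine add_le_add hl2.le (mul_le_mul_of_nonneg_left hh1 (sq_nonneg t))
    _ = absDet B * (l2Sq U (fun y => v (x0 + B y) - wh.1 y)
        + (opN B.symm * t) ^ 2 * h1SemiSq U wh.1) := by ring

lemma measurable_rpow_const (c : ℝ) : Measurable fun x : ℝ => x ^ c := by
  have h : (fun x : ℝ => x ^ c) = Set.piecewise (Set.Ioi (0:ℝ))
      (fun x => Real.exp (Real.log x * c))
      (Set.piecewise {(0:ℝ)} (fun _ => if c = 0 then (1:ℝ) else 0)
        (fun x => Real.exp (Real.log x * c) * Real.cos (c * Real.pi))) := by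
    classical
    funext x
    rcases lt_trichotomy x 0 with hx | hx | hx
    · rw [Set.piecewise_eq_of_notMem _ _ _ (by simp [Set.mem_Ioi]; linarith),
        Set.piecewise_eq_of_notMem _ _ _ (by simp [hx.ne]),
        Real.rpow_def_of_neg hx]
    · subst hx
      rw [Set.piecewise_eq_of_notMem _ _ _ (by simp), Set.piecewise_eq_of_mem _ _ _ (by simp)]
      by_cases hc : c = 0
      · subst hc; simp [Real.rpow_zero]
      · simp [hc, Real.zero_rpow hc]
    · rw [Set.piecewise_eq_of_mem _ _ _ (Set.mem_Ioi.mpr hx), Real.rpow_def_of_pos hx]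
  rw [h]
  refine Measurable.piecewise measurableSet_Ioi
    ((Real.measurable_log.mul measurable_const).exp) ?_
  exact Measurable.piecewise (measurableSet_singleton 0) measurable_const
    (((Real.measurable_log.mul measurable_const).exp).mul measurable_const)

lemma kinf_measurable (O : Set (Euc n)) (v : Euc n → ℝ) :
    Measurable (fun t : ℝ => ⨅ w : {w : Euc n → ℝ // memH10 O w},
      (l2Sq O (fun x => v x - w.1 x) + t ^ 2 * h1SemiSq O w.1)) := by
  set g : ℝ → ℝ := fun u => ⨅ w : {w : Euc n → ℝ // memH10 O w},
    (l2Sq O (fun x => v x - w.1 x) + (max u 0) * h1SemiSq O w.1) with hg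
  have hmono : Monotone g := by
    intro u1 u2 h
    have hbdd : BddBelow (Set.range fun w : {w : Euc n → ℝ // memH10 O w} =>
        l2Sq O (fun x => v x - w.1 x) + (max u1 0) * h1SemiSq O w.1) := by
      refine ⟨0, fun r hr => ?_⟩
      obtain ⟨w, rfl⟩ := hr
      exact add_nonneg (l2Sq_nonneg _ _)
        (mul_nonneg (le_max_right _ _) (h1SemiSq_nonneg _ _))
    refine ciInf_mono hbdd fun w => ?_
    exact add_le_add le_rfl
      (mul_le_mul_of_nonneg_right (max_le_max h le_rfl) (h1SemiSq_nonneg _ _))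
  have hcomp : (fun t : ℝ => ⨅ w : {w : Euc n → ℝ // memH10 O w},
      (l2Sq O (fun x => v x - w.1 x) + t ^ 2 * h1SemiSq O w.1)) = fun t => g (t ^ 2) := by
    funext t
    rw [hg]
    refine iInf_congr fun w => ?_
    rw [max_eq_left (sq_nonneg t)]
  rw [hcomp]
  exact hmono.measurable.comp (measurable_id.pow_const 2)

lemma lintegral_piece (K : ℝ → ℝ) (hm : Measurable K) (c : ℝ) (hc : 0 < c) (s : ℝ) :
    ∫⁻ t in Set.Ioi (0:ℝ), ENNReal.ofReal (t ^ (-2 * s - 1) * K (c * t))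
      = ENNReal.ofReal (c ^ (2 * s)) *
        ∫⁻ u in Set.Ioi (0:ℝ), ENNReal.ofReal (u ^ (-2 * s - 1) * K u) := by
  set g : ℝ → ENNReal := fun u => ENNReal.ofReal (u ^ (-2 * s - 1) * K u) with hgdef
  have hgm : Measurable g :=
    ((measurable_rpow_const _).mul hm).ennreal_ofReal
  have step1 : ∀ t ∈ Set.Ioi (0:ℝ),
      ENNReal.ofReal (t ^ (-2 * s - 1) * K (c * t))
        = ENNReal.ofReal (c ^ (2 * s + 1)) * g (c * t) := by
    intro t ht
    have ht' : (0:ℝ) < t := ht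
    have hmul : (c * t) ^ (-2 * s - 1) = c ^ (-2 * s - 1) * t ^ (-2 * s - 1) :=
      Real.mul_rpow hc.le ht'.le
    have hcc : c ^ (2 * s + 1) * c ^ (-2 * s - 1) = 1 := by
      rw [← Real.rpow_add hc]; norm_num
    have heq : c ^ (2 * s + 1) * ((c * t) ^ (-2 * s - 1) * K (c * t))
        = t ^ (-2 * s - 1) * K (c * t) := by
      rw [hmul, show c ^ (2 * s + 1) * (c ^ (-2 * s - 1) * t ^ (-2 * s - 1) * K (c * t))
        = (c ^ (2 * s + 1) * c ^ (-2 * s - 1)) * (t ^ (-2 * s - 1) * K (c * t)) from by ring,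
        hcc, one_mul]
    rw [← heq, ENNReal.ofReal_mul (Real.rpow_nonneg hc.le _)]
  have step1' : ∫⁻ t in Set.Ioi (0:ℝ), ENNReal.ofReal (t ^ (-2 * s - 1) * K (c * t))
      = ENNReal.ofReal (c ^ (2 * s + 1)) * ∫⁻ t in Set.Ioi (0:ℝ), g (c * t) := by
    rw [← lintegral_const_mul' _ _ ENNReal.ofReal_ne_top]
    refine setLIntegral_congr_fun measurableSet_Ioi ?_
    exact step1
  have hpre : (fun t : ℝ => c * t) ⁻¹' Set.Ioi (0:ℝ) = Set.Ioi (0:ℝ) := by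
    ext x
    simp only [Set.mem_preimage, Set.mem_Ioi]
    constructor
    · intro h; by_contra hx; push_neg at hx
      nlinarith
    · intro h; positivity
  have step2 : ∫⁻ t in Set.Ioi (0:ℝ), g (c * t)
      = ENNReal.ofReal c⁻¹ * ∫⁻ u in Set.Ioi (0:ℝ), g u := by
    have hmeas : Measurable fun t : ℝ => c * t := measurable_const_mul c
    have h1 : ∫⁻ t in Set.Ioi (0:ℝ), g (c * t)
        = ∫⁻ u, g u ∂(Measure.map (fun t : ℝ => c * t) (volume.restrict (Set.Ioi 0))) :=
      (lintegral_map hgm hmeas).symm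
    rw [h1]
    have h2 : Measure.map (fun t : ℝ => c * t) (volume.restrict (Set.Ioi 0))
        = (ENNReal.ofReal |c⁻¹| • volume).restrict (Set.Ioi 0) := by
      conv_lhs => rw [← hpre]
      rw [← Measure.restrict_map hmeas measurableSet_Ioi,
        Real.map_volume_mul_left (ne_of_gt hc)]
    rw [h2, Measure.restrict_smul, lintegral_smul_measure, abs_of_nonneg (inv_nonneg.2 hc.le), smul_eq_mul]
  rw [step1', step2, ← mul_assoc, ← ENNReal.ofReal_mul (Real.rpow_nonneg hc.le _)]
  congr 2
  rw [Real.rpow_add hc, Real.rpow_one]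
  field_simp

lemma interp_le (K1 K2 : ℝ → ℝ) (hm1 : Measurable K1) (hm2 : Measurable K2)
    (h1nn : ∀ t, 0 ≤ K1 t) (h2nn : ∀ t, 0 ≤ K2 t)
    (a c a' c' : ℝ) (ha : 0 < a) (hc : 0 < c) (ha' : 0 < a') (hc' : 0 < c') (s : ℝ)
    (hle : ∀ t, 0 < t → K1 t ≤ a * K2 (c * t))
    (hrev : ∀ t, 0 < t → K2 t ≤ a' * K1 (c' * t)) :
    (∫ t in Set.Ioi (0:ℝ), t ^ (-2 * s - 1) * K1 t)
      ≤ a * c ^ (2 * s) * ∫ t in Set.Ioi (0:ℝ), t ^ (-2 * s - 1) * K2 t := by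
  set L1 : ENNReal := ∫⁻ t in Set.Ioi (0:ℝ), ENNReal.ofReal (t ^ (-2 * s - 1) * K1 t) with hL1
  set L2 : ENNReal := ∫⁻ t in Set.Ioi (0:ℝ), ENNReal.ofReal (t ^ (-2 * s - 1) * K2 t) with hL2
  have hi1 : (∫ t in Set.Ioi (0:ℝ), t ^ (-2 * s - 1) * K1 t) = L1.toReal := by
    refine integral_eq_lintegral_of_nonneg_ae ?_ ?_
    · filter_upwards [ae_restrict_mem measurableSet_Ioi] with t ht
      exact mul_nonneg (Real.rpow_nonneg (le_of_lt ht) _) (h1nn t)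
    · exact ((measurable_rpow_const _).mul hm1).aestronglyMeasurable
  have hi2 : (∫ t in Set.Ioi (0:ℝ), t ^ (-2 * s - 1) * K2 t) = L2.toReal := by
    refine integral_eq_lintegral_of_nonneg_ae ?_ ?_
    · filter_upwards [ae_restrict_mem measurableSet_Ioi] with t ht
      exact mul_nonneg (Real.rpow_nonneg (le_of_lt ht) _) (h2nn t)
    · exact ((measurable_rpow_const _).mul hm2).aestronglyMeasurable
  have key : ∀ (J1 J2 : ℝ → ℝ), Measurable J2 → (∀ t, 0 ≤ J1 t) →
      ∀ b d : ℝ, 0 < b → 0 < d → (∀ t, 0 < t → J1 t ≤ b * J2 (d * t)) →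
      (∫⁻ t in Set.Ioi (0:ℝ), ENNReal.ofReal (t ^ (-2 * s - 1) * J1 t))
        ≤ ENNReal.ofReal (b * d ^ (2 * s)) *
          ∫⁻ t in Set.Ioi (0:ℝ), ENNReal.ofReal (t ^ (-2 * s - 1) * J2 t) := by
    intro J1 J2 hmJ2 hJ1nn b d hb hd hJle
    have step1 : (∫⁻ t in Set.Ioi (0:ℝ), ENNReal.ofReal (t ^ (-2 * s - 1) * J1 t))
        ≤ ∫⁻ t in Set.Ioi (0:ℝ), ENNReal.ofReal (b * (t ^ (-2 * s - 1) * J2 (d * t))) := by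
      refine lintegral_mono_ae ?_
      filter_upwards [ae_restrict_mem measurableSet_Ioi] with t ht
      refine ENNReal.ofReal_le_ofReal ?_
      have h1 := hJle t ht
      calc t ^ (-2 * s - 1) * J1 t
          ≤ t ^ (-2 * s - 1) * (b * J2 (d * t)) :=
            mul_le_mul_of_nonneg_left h1 (Real.rpow_nonneg (le_of_lt ht) _)
        _ = b * (t ^ (-2 * s - 1) * J2 (d * t)) := by ring
    have step2 : (∫⁻ t in Set.Ioi (0:ℝ), ENNReal.ofReal (b * (t ^ (-2 * s - 1) * J2 (d * t))))
        = ENNReal.ofReal b * ∫⁻ t in Set.Ioi (0:ℝ),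
            ENNReal.ofReal (t ^ (-2 * s - 1) * J2 (d * t)) := by
      rw [← lintegral_const_mul' _ _ ENNReal.ofReal_ne_top]
      refine setLIntegral_congr_fun measurableSet_Ioi ?_
      intro t _
      exact ENNReal.ofReal_mul hb.le
    refine step1.trans ?_
    rw [step2, lintegral_piece J2 hmJ2 d hd s, ← mul_assoc, ← ENNReal.ofReal_mul hb.le]
  have hL : L1 ≤ ENNReal.ofReal (a * c ^ (2 * s)) * L2 :=
    key K1 K2 hm2 h1nn a c ha hc hle
  have hLrev : L2 ≤ ENNReal.ofReal (a' * c' ^ (2 * s)) * L1 :=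
    key K2 K1 hm1 h2nn a' c' ha' hc' hrev
  have hacnn : (0:ℝ) ≤ a * c ^ (2 * s) := mul_nonneg ha.le (Real.rpow_nonneg hc.le _)
  by_cases htop : L2 = ⊤
  · have hL1top : L1 = ⊤ := by
      by_contra h
      have : L2 < ⊤ := lt_of_le_of_lt hLrev
        (ENNReal.mul_lt_top ENNReal.ofReal_lt_top (lt_top_iff_ne_top.2 h))
      exact (lt_top_iff_ne_top.1 this) htop
    rw [hi1, hi2, htop, hL1top]
    simp
  · have hL1ne : L1 ≠ ⊤ := by
      intro h
      rw [h] at hL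
      have : ENNReal.ofReal (a * c ^ (2 * s)) * L2 < ⊤ :=
        ENNReal.mul_lt_top ENNReal.ofReal_lt_top (lt_top_iff_ne_top.2 htop)
      exact (lt_top_iff_ne_top.1 this) (top_le_iff.1 hL)
    rw [hi1, hi2]
    have h1 := ENNReal.toReal_mono (by
      exact ENNReal.mul_ne_top ENNReal.ofReal_ne_top htop) hL
    rw [ENNReal.toReal_mul, ENNReal.toReal_ofReal hacnn] at h1
    exact h1

lemma zero_dim_interp (s : ℝ) (O : Set (Euc 0)) (v : Euc 0 → ℝ) :
    interpNorm0Sq s O v = 0 := by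
  haveI hsub : Subsingleton (Euc 0) := ⟨fun a b => by ext i; exact i.elim0⟩
  haveI : Finite (Euc 0) := Finite.of_subsingleton
  have hv0 : v = fun _ => v 0 := funext fun x => congrArg v (Subsingleton.elim x 0)
  have hfd : ∀ (f : Euc 0 → ℝ) (x : Euc 0), fderiv ℝ f x = 0 := by
    intro f x
    have hf : f = fun _ => f 0 := funext fun y => congrArg f (Subsingleton.elim y 0)
    rw [hf]
    exact fderiv_const_apply (f 0)
  have hl2z : ∀ (f : Euc 0 → ℝ), (∀ x, f x = 0) → l2Sq O f = 0 := by
    intro f hfz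
    have : f = fun _ => (0:ℝ) := funext hfz
    rw [this]
    simp [l2Sq]
  have hh1z : ∀ (f : Euc 0 → ℝ), h1SemiSq O f = 0 := by
    intro f
    have : (fun x : Euc 0 => ‖fderiv ℝ f x‖ ^ 2) = fun _ => (0:ℝ) := by
      funext x; rw [hfd f x]; simp
    rw [h1SemiSq, this]
    simp
  have hfin : IsFiniteMeasure (volume.restrict O) := by
    constructor
    rw [Measure.restrict_apply_univ]
    exact lt_of_le_of_lt (measure_mono (Set.subset_univ O)) isCompact_univ.measure_lt_top
  have hmemv : memH10 O v := by
    refine ⟨⟨?_, ?_, ?_⟩, ?_⟩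
    · rw [hv0]; exact memLp_const (v 0)
    · rw [hv0]; exact differentiableOn_const (v 0)
    · have : (fun x : Euc 0 => ‖fderiv ℝ v x‖) = fun _ => (0:ℝ) := by
        funext x; rw [hfd v x]; simp
      rw [this]; exact memLp_const 0
    · by_cases hO : O.Nonempty
      · have hOuniv : O = Set.univ := by
          ext x
          simp only [Set.mem_univ, iff_true]
          obtain ⟨y, hy⟩ := hO
          rwa [Subsingleton.elim x y]
        refine ⟨fun _ _ => v 0, fun k => ⟨contDiff_const, ?_, ?_⟩, ?_⟩
        · exact IsCompact.of_isClosed_subset isCompact_univ (isClosed_tsupport _)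
            (Set.subset_univ _)
        · rw [hOuniv]; exact Set.subset_univ _
        · have hseq : (fun _ : ℕ => l2Sq O (fun x => v x - v 0)
              + h1SemiSq O (fun x => v x - v 0)) = fun _ => (0:ℝ) := by
            funext k
            rw [hl2z _ (fun x => by rw [congrArg v (Subsingleton.elim x 0)]; ring), hh1z,
              add_zero]
          rw [hseq]; exact tendsto_const_nhds
      · have hOempty : O = ∅ := Set.not_nonempty_iff_eq_empty.1 hO
        refine ⟨fun _ _ => 0, fun k => ⟨contDiff_const, ?_, ?_⟩, ?_⟩
        · have h0 : Function.support (fun _ : Euc 0 => (0:ℝ)) = ∅ :=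
            Function.support_eq_empty_iff.2 rfl
          rw [HasCompactSupport, tsupport, h0, closure_empty]
          exact isCompact_empty
        · have h0 : Function.support (fun _ : Euc 0 => (0:ℝ)) = ∅ :=
            Function.support_eq_empty_iff.2 rfl
          rw [tsupport, h0, closure_empty]
          exact empty_subset O
        · have hseq : (fun _ : ℕ => l2Sq O (fun x => v x - 0)
              + h1SemiSq O (fun x => v x - 0)) = fun _ => (0:ℝ) := by
            funext k
            have : l2Sq O (fun x => v x - 0) = 0 := by
              rw [hOempty]
              simp [l2Sq]
            rw [this, hh1z, add_zero]
          rw [hseq]; exact tendsto_const_nhds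
  have hkinf : ∀ t : ℝ, (⨅ w : {w : Euc 0 → ℝ // memH10 O w},
      (l2Sq O (fun x => v x - w.1 x) + t ^ 2 * h1SemiSq O w.1)) = 0 := by
    intro t
    refine le_antisymm ?_ (kinf_nonneg O v t)
    have hval : l2Sq O (fun x => v x - v x) + t ^ 2 * h1SemiSq O v = 0 := by
      rw [hl2z _ (fun x => sub_self _), hh1z, mul_zero, add_zero]
    exact (ciInf_le (kinf_bddBelow O v t) ⟨v, hmemv⟩).trans_eq hval
  unfold interpNorm0Sq
  have hzero : (fun t : ℝ => t ^ (-2 * s - 1) * ⨅ w : {w : Euc 0 → ℝ // memH10 O w},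
      (l2Sq O (fun x => v x - w.1 x) + t ^ 2 * h1SemiSq O w.1)) = fun _ => (0:ℝ) := by
    funext t
    rw [hkinf t, mul_zero]
  rw [hzero]
  simp

end AT

/-- transformation of the scalable `H̃^s` interpolation norm under affine maps:
`|det B| ‖B‖^{-2s} ‖v̂‖² ≤ ‖v‖² ≤ |det B| ‖B⁻¹‖^{2s} ‖v̂‖²` for the `[L²,H¹₀]_s` norm. -/
theorem interpNorm0_affine_transform {n : ℕ} (Ohat : Set (Euc n)) (hOhat : IsLipschitzDomain Ohat)
    (x0 : Euc n) (B : Euc n ≃L[ℝ] Euc n) (O : Set (Euc n))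
    (hO : O = (fun y => x0 + B y) '' Ohat) (s : ℝ) (hs : s ∈ Set.Ioo (0 : ℝ) 1)
    (v : Euc n → ℝ) (hv : memHs s Ohat (fun y => v (x0 + B y))) :
    absDet B * opN B ^ (-(2 * s)) * interpNorm0Sq s Ohat (fun y => v (x0 + B y)) ≤
        interpNorm0Sq s O v ∧
      interpNorm0Sq s O v ≤
        absDet B * opN B.symm ^ (2 * s) * interpNorm0Sq s Ohat (fun y => v (x0 + B y)) := by
  obtain ⟨hOhopen, hOhbdd, -⟩ := hOhat
  by_cases hn : n = 0
  · subst hn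
    rw [AT.zero_dim_interp s O v, AT.zero_dim_interp s Ohat (fun y => v (x0 + B y))]
    constructor
    · simp
    · have h1 : 0 ≤ absDet B * opN B.symm ^ (2 * s) :=
        mul_nonneg (AT.absDet_pos B).le (Real.rpow_nonneg (norm_nonneg _) _)
      simpa using h1
  · haveI : Nontrivial (Euc n) := by
      have hn' : 0 < n := Nat.pos_of_ne_zero hn
      refine ⟨EuclideanSpace.single ⟨0, hn'⟩ (1:ℝ), 0, ?_⟩
      intro h
      have := congrArg (fun x : Euc n => x ⟨0, hn'⟩) h
      simp [EuclideanSpace.single_apply] at this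
    have hdpos := AT.absDet_pos B
    have hBpos : 0 < opN B := by
      rw [opN, norm_pos_iff]
      intro h
      obtain ⟨x, hx⟩ := exists_ne (0 : Euc n)
      apply hx
      apply B.injective
      have hBx : (B : Euc n →L[ℝ] Euc n) x = 0 := by rw [h]; rfl
      simpa using hBx
    have hBspos : 0 < opN B.symm := by
      rw [opN, norm_pos_iff]
      intro h
      obtain ⟨x, hx⟩ := exists_ne (0 : Euc n)
      apply hx
      apply B.symm.injective
      have hBx : (B.symm : Euc n →L[ℝ] Euc n) x = 0 := by rw [h]; rfl
      simpa using hBx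
    have hOopen : IsOpen O := hO ▸ AT.isOpen_image x0 B Ohat hOhopen
    have hObdd : IsBounded O := hO ▸ AT.image_isBounded x0 B Ohat hOhbdd
    have hOhat_eq : Ohat = (fun x => -B.symm x0 + B.symm x) '' O := by
      rw [hO, ← Set.image_comp]
      have hcomp : ((fun x : Euc n => -B.symm x0 + B.symm x) ∘ fun y => x0 + B y) = id := by
        funext y; simp
      rw [hcomp, Set.image_id]
    set K1 : ℝ → ℝ := fun t => ⨅ w : {w : Euc n → ℝ // memH10 O w},
      (l2Sq O (fun x => v x - w.1 x) + t ^ 2 * h1SemiSq O w.1) with hK1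
    set K2 : ℝ → ℝ := fun t => ⨅ w : {w : Euc n → ℝ // memH10 Ohat w},
      (l2Sq Ohat (fun y => v (x0 + B y) - w.1 y) + t ^ 2 * h1SemiSq Ohat w.1) with hK2
    have hm1 : Measurable K1 := AT.kinf_measurable O v
    have hm2 : Measurable K2 := AT.kinf_measurable Ohat (fun y => v (x0 + B y))
    have h1nn : ∀ t, 0 ≤ K1 t := fun t => AT.kinf_nonneg O v t
    have h2nn : ∀ t, 0 ≤ K2 t := fun t => AT.kinf_nonneg Ohat (fun y => v (x0 + B y)) t
    have hle : ∀ t, 0 < t → K1 t ≤ absDet B * K2 (opN B.symm * t) := by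
      intro t _
      exact AT.kinf_le x0 B Ohat O hOhopen hOhbdd hO v t
    have hrev : ∀ t, 0 < t → K2 t ≤ (absDet B)⁻¹ * K1 (opN B * t) := by
      intro t _
      have h := AT.kinf_le (-B.symm x0) B.symm O Ohat hOopen hObdd hOhat_eq
        (fun y => v (x0 + B y)) t
      rw [AT.absDet_symm] at h
      have hsimp : ∀ y : Euc n, x0 + B (-B.symm x0 + B.symm y) = y := fun y => by simp
      simp only [ContinuousLinearEquiv.symm_symm, hsimp] at h
      exact h
    have hI : interpNorm0Sq s O v = ∫ t in Set.Ioi (0:ℝ), t ^ (-2 * s - 1) * K1 t := rfl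
    have hIhat : interpNorm0Sq s Ohat (fun y => v (x0 + B y))
        = ∫ t in Set.Ioi (0:ℝ), t ^ (-2 * s - 1) * K2 t := rfl
    have hup := AT.interp_le K1 K2 hm1 hm2 h1nn h2nn (absDet B) (opN B.symm)
      ((absDet B)⁻¹) (opN B) hdpos hBspos (inv_pos.2 hdpos) hBpos s hle hrev
    have hdown := AT.interp_le K2 K1 hm2 hm1 h2nn h1nn ((absDet B)⁻¹) (opN B)
      (absDet B) (opN B.symm) (inv_pos.2 hdpos) hBpos hdpos hBspos s hrev hle
    rw [hI, hIhat]
    constructor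
    · have hp : 0 < opN B ^ (2 * s) := Real.rpow_pos_of_pos hBpos _
      have hneg : opN B ^ (-(2 * s)) = (opN B ^ (2 * s))⁻¹ := Real.rpow_neg hBpos.le _
      rw [hneg]
      have hcnn : 0 ≤ absDet B * (opN B ^ (2 * s))⁻¹ :=
        mul_nonneg hdpos.le (inv_nonneg.2 hp.le)
      have h2 := mul_le_mul_of_nonneg_left hdown hcnn
      have h3 : absDet B * (opN B ^ (2 * s))⁻¹ *
          ((absDet B)⁻¹ * opN B ^ (2 * s) * (∫ t in Set.Ioi (0:ℝ), t ^ (-2 * s - 1) * K1 t))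
          = ∫ t in Set.Ioi (0:ℝ), t ^ (-2 * s - 1) * K1 t := by
        field_simp
      calc absDet B * (opN B ^ (2 * s))⁻¹ * (∫ t in Set.Ioi (0:ℝ), t ^ (-2 * s - 1) * K2 t)
          ≤ absDet B * (opN B ^ (2 * s))⁻¹ *
            ((absDet B)⁻¹ * opN B ^ (2 * s) * (∫ t in Set.Ioi (0:ℝ), t ^ (-2 * s - 1) * K1 t)) :=
            h2
        _ = ∫ t in Set.Ioi (0:ℝ), t ^ (-2 * s - 1) * K1 t := h3
    · exact hup

end
end

section
/- Transformation of the weighted H̃^s Sobolev-Slobodeckij norm under affine maps: define ||v||_{∼,s,O}^2 := |v|_{s,O}^2 + ∫_O |v(x)|^2 / dist(x,∂O)^{2s} dx. Then with O = F(Ô), F(x̂)=x0+Bx̂, B invertible, v̂ = v∘F, and s ∈ (0,1): |det B| ||B||^{-2s} min{|det B| ||B||^{-n}, 1} ||v̂||_{∼,s,Ô}^2 ≤ ||v||_{∼,s,O}^2 ≤ |det B| ||B^{-1}||^{2s} max{|det B| ||B^{-1}||^n, 1} ||v̂||_{∼,s,Ô}^2. -/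
open MeasureTheory Metric Set Bornology
noncomputable section

variable {n : ℕ}

section Sandwich
variable {α : Type*} [MeasurableSpace α] {μ : Measure α}

lemma my_sandwich {f g : α → ℝ} {c C : ℝ} (hc : 0 < c)
    (hf : AEStronglyMeasurable f μ) (hg : AEStronglyMeasurable g μ)
    (hg0 : ∀ᵐ x ∂μ, 0 ≤ g x)
    (h1 : ∀ᵐ x ∂μ, c * g x ≤ f x) (h2 : ∀ᵐ x ∂μ, f x ≤ C * g x) :
    c * ∫ x, g x ∂μ ≤ ∫ x, f x ∂μ ∧ ∫ x, f x ∂μ ≤ C * ∫ x, g x ∂μ := by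
  by_cases hgi : Integrable g μ
  · have hfi : Integrable f μ := by
      refine (hgi.const_mul C).mono' hf ?_
      filter_upwards [hg0, h1, h2] with x h0 ha hb
      rw [Real.norm_eq_abs, abs_le]
      refine ⟨by nlinarith [mul_nonneg hc.le h0], hb⟩
    constructor
    · calc c * ∫ x, g x ∂μ = ∫ x, c * g x ∂μ := (integral_const_mul c g).symm
        _ ≤ ∫ x, f x ∂μ := integral_mono_ae (hgi.const_mul c) hfi h1
    · calc ∫ x, f x ∂μ ≤ ∫ x, C * g x ∂μ := integral_mono_ae hfi (hgi.const_mul C) h2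
        _ = C * ∫ x, g x ∂μ := integral_const_mul C g
  · have hfi : ¬ Integrable f μ := by
      intro hfi
      apply hgi
      refine (hfi.const_mul c⁻¹).mono' hg ?_
      filter_upwards [hg0, h1] with x h0 ha
      rw [Real.norm_eq_abs, abs_of_nonneg h0]
      calc g x = c⁻¹ * (c * g x) := by field_simp
        _ ≤ c⁻¹ * f x := mul_le_mul_of_nonneg_left ha (inv_nonneg.2 hc.le)
    rw [integral_undef hgi, integral_undef hfi]
    simp

lemma my_sandwich2 [SFinite μ] {f g : α → α → ℝ} {c C : ℝ} (hc : 0 < c)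
    (hf : AEStronglyMeasurable (fun p : α × α => f p.1 p.2) (μ.prod μ))
    (hg : AEStronglyMeasurable (fun p : α × α => g p.1 p.2) (μ.prod μ))
    (hg0 : ∀ x y, 0 ≤ g x y)
    (h1 : ∀ x y, c * g x y ≤ f x y) (h2 : ∀ x y, f x y ≤ C * g x y) :
    c * ∫ x, ∫ y, g x y ∂μ ∂μ ≤ ∫ x, ∫ y, f x y ∂μ ∂μ ∧
      (∫ x, ∫ y, f x y ∂μ ∂μ) ≤ C * ∫ x, ∫ y, g x y ∂μ ∂μ := by
  have hF : AEStronglyMeasurable (fun x => ∫ y, f x y ∂μ) μ := hf.integral_prod_right'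
  have hG : AEStronglyMeasurable (fun x => ∫ y, g x y ∂μ) μ := hg.integral_prod_right'
  have key : ∀ᵐ x ∂μ, (c * ∫ y, g x y ∂μ ≤ ∫ y, f x y ∂μ) ∧
      (∫ y, f x y ∂μ ≤ C * ∫ y, g x y ∂μ) := by
    filter_upwards [hf.prodMk_left, hg.prodMk_left] with x hfx hgx
    exact my_sandwich hc hfx hgx (Filter.Eventually.of_forall (hg0 x))
      (Filter.Eventually.of_forall (h1 x)) (Filter.Eventually.of_forall (h2 x))
  exact my_sandwich hc hF hG (Filter.Eventually.of_forall fun x => integral_nonneg (hg0 x))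
    (key.mono fun x h => h.1) (key.mono fun x h => h.2)

end Sandwich

lemma my_div_sandwich {a d D b b' q : ℝ} (ha : 0 ≤ a) (hd : 0 < d) (hD : 0 < D)
    (hb : 0 < b) (hb' : 0 < b') (hq : 0 ≤ q) (h1 : D ≤ b * d) (h2 : d ≤ b' * D) :
    b ^ (-q) * (a / d ^ q) ≤ a / D ^ q ∧ a / D ^ q ≤ b' ^ q * (a / d ^ q) := by
  have hdq : 0 < d ^ q := Real.rpow_pos_of_pos hd q
  have hDq : 0 < D ^ q := Real.rpow_pos_of_pos hD q
  have hbq : 0 < b ^ q := Real.rpow_pos_of_pos hb q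
  have hb'q : 0 < b' ^ q := Real.rpow_pos_of_pos hb' q
  have k1 : D ^ q ≤ b ^ q * d ^ q := by
    rw [← Real.mul_rpow hb.le hd.le]
    exact Real.rpow_le_rpow hD.le h1 hq
  have k2 : d ^ q ≤ b' ^ q * D ^ q := by
    rw [← Real.mul_rpow hb'.le hD.le]
    exact Real.rpow_le_rpow hd.le h2 hq
  constructor
  · rw [Real.rpow_neg hb.le, inv_mul_eq_div, div_div]
    exact div_le_div_of_nonneg_left ha hDq (by linarith)
  · have e : b' ^ q * (a / d ^ q) = a / (d ^ q / b' ^ q) := by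
      field_simp
    rw [e]
    refine div_le_div_of_nonneg_left ha (by positivity) ?_
    rw [div_le_iff₀ hb'q, mul_comm]
    exact k2

lemma my_cov {n : ℕ} (x0 : Euc n) (B : Euc n ≃L[ℝ] Euc n) {A : Set (Euc n)}
    (hA : MeasurableSet A) (g : Euc n → ℝ) :
    ∫ x in (fun y => x0 + B y) '' A, g x = absDet B * ∫ y in A, g (x0 + B y) := by
  rw [integral_image_eq_integral_abs_det_fderiv_smul volume hA
    (fun x _ => ((B.hasFDerivAt (x := x)).const_add x0).hasFDerivWithinAt)
    (fun a _ b _ h => B.injective (by simpa using add_left_cancel h)) g]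
  simp only [smul_eq_mul]
  rw [integral_const_mul]
  rfl

lemma my_frontier_map {n : ℕ} (x0 : Euc n) (B : Euc n ≃L[ℝ] Euc n) (S : Set (Euc n)) :
    frontier ((fun y => x0 + B y) '' S) = (fun y => x0 + B y) '' frontier S := by
  have h : (fun y : Euc n => x0 + B y) =
      (Homeomorph.addLeft x0) ∘ (B.toHomeomorph) := rfl
  rw [h, image_comp, ← Homeomorph.image_frontier, ← Homeomorph.image_frontier, image_comp]

lemma my_infDist_map_le {n : ℕ} (x0 : Euc n) (B : Euc n ≃L[ℝ] Euc n) (hB : 0 < opN B)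
    (x : Euc n) (S : Set (Euc n)) :
    infDist (x0 + B x) ((fun y => x0 + B y) '' S) ≤ opN B * infDist x S := by
  rcases S.eq_empty_or_nonempty with rfl | hS
  · simp [Metric.infDist_empty]
  by_contra hcon
  push_neg at hcon
  have h' : infDist x S < infDist (x0 + B x) ((fun y => x0 + B y) '' S) / opN B := by
    rw [lt_div_iff₀ hB]
    rwa [mul_comm] at hcon
  obtain ⟨y, hyS, hy⟩ := (infDist_lt_iff hS).1 h'
  have hle : infDist (x0 + B x) ((fun y => x0 + B y) '' S) ≤ dist (x0 + B x) (x0 + B y) :=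
    infDist_le_dist_of_mem ⟨y, hyS, rfl⟩
  have hd : dist (x0 + B x) (x0 + B y) ≤ opN B * dist x y := by
    rw [dist_eq_norm, dist_eq_norm, add_sub_add_left_eq_sub, ← map_sub]
    exact (B : Euc n →L[ℝ] Euc n).le_opNorm (x - y)
  have := (lt_div_iff₀ hB).1 hy
  nlinarith



lemma my_tilde_zero {s : ℝ} (hs : 0 < s) (O : Set (Euc 0)) (v : Euc 0 → ℝ) :
    tildeNormSq s O v = 0 := by
  have hsub : Subsingleton (Euc 0) := (WithLp.equiv 2 (Fin 0 → ℝ)).subsingleton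
  have h1 : slobSq s O v = 0 := by
    have key : (fun (x : Euc 0) => ∫ y in O, |v x - v y| ^ 2 / ‖x - y‖ ^ (((0:ℕ):ℝ) + 2 * s))
        = fun _ => (0:ℝ) := by
      funext x
      have hkey2 : (fun (y : Euc 0) => |v x - v y| ^ 2 / ‖x - y‖ ^ (((0:ℕ):ℝ) + 2 * s))
          = fun _ => (0:ℝ) := by
        funext y
        rw [Subsingleton.elim y x]
        simp
      rw [hkey2, integral_zero]
    unfold slobSq
    rw [key, integral_zero]
  have h2 : (∫ x in O, v x ^ 2 / infDist x (frontier O) ^ (2 * s)) = 0 := by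
    have key : (fun x : Euc 0 => v x ^ 2 / infDist x (frontier O) ^ (2 * s))
        = fun _ => (0:ℝ) := by
      funext x
      have hz : infDist x (frontier O) = 0 := by
        rcases (frontier O).eq_empty_or_nonempty with h | ⟨y, hy⟩
        · rw [h]; exact infDist_empty
        · refine le_antisymm ?_ infDist_nonneg
          have hd := infDist_le_dist_of_mem (x := x) hy
          rwa [Subsingleton.elim y x, dist_self] at hd
      rw [hz, Real.zero_rpow (by positivity : (2*s:ℝ) ≠ 0), div_zero]
    rw [key, integral_zero]
  unfold tildeNormSq
  rw [h1, h2, add_zero]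

lemma my_opN_pos {n : ℕ} [Nontrivial (Euc n)] (B : Euc n ≃L[ℝ] Euc n) : 0 < opN B := by
  refine norm_pos_iff.mpr fun h => ?_
  obtain ⟨y, hy⟩ := exists_ne (0 : Euc n)
  apply hy
  have h1 : B (B.symm y) = y := B.apply_symm_apply y
  rw [show B (B.symm y) = (B : Euc n →L[ℝ] Euc n) (B.symm y) from rfl, h] at h1
  simpa using h1.symm


/-- transformation of the weighted `H̃^s` Sobolev–Slobodeckij norm
`‖v‖_{∼,s,O}² = |v|_{s,O}² + ∫_O |v|²/dist(x,∂O)^{2s}` under affine maps. -/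
theorem tildeNorm_affine_transform {n : ℕ} (Ohat : Set (Euc n)) (hOhat : IsLipschitzDomain Ohat)
    (x0 : Euc n) (B : Euc n ≃L[ℝ] Euc n) (O : Set (Euc n))
    (hO : O = (fun y => x0 + B y) '' Ohat) (s : ℝ) (hs : s ∈ Set.Ioo (0 : ℝ) 1)
    (v : Euc n → ℝ) (hv : memHs s Ohat (fun y => v (x0 + B y))) :
    absDet B * opN B ^ (-(2 * s)) * min (absDet B * opN B ^ (-(n : ℝ))) 1 *
        tildeNormSq s Ohat (fun y => v (x0 + B y)) ≤ tildeNormSq s O v ∧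
      tildeNormSq s O v ≤
        absDet B * opN B.symm ^ (2 * s) * max (absDet B * opN B.symm ^ (n : ℝ)) 1 *
          tildeNormSq s Ohat (fun y => v (x0 + B y)) := by
  obtain ⟨hs0, hs1⟩ := hs
  rcases Nat.eq_zero_or_pos n with hn | hn
  · subst hn
    rw [my_tilde_zero hs0, my_tilde_zero hs0]
    simp
  haveI hnonempty : Nonempty (Fin n) := ⟨⟨0, hn⟩⟩
  haveI : Nontrivial (Euc n) := (WithLp.equiv 2 (Fin n → ℝ)).nontrivial
  have hb : 0 < opN B := my_opN_pos B
  have hb' : 0 < opN B.symm := my_opN_pos B.symm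
  have hdet : 0 < absDet B := abs_pos.mpr (LinearEquiv.isUnit_det' B.toLinearEquiv).ne_zero
  have hOmeas : MeasurableSet Ohat := hOhat.1.measurableSet
  have h2s : (0:ℝ) < 2 * s := by linarith
  have hp : (0:ℝ) < (n:ℝ) + 2 * s := by
    have := Nat.cast_nonneg (α := ℝ) n
    linarith
  have hvm : AEMeasurable (fun y => v (x0 + B y)) (volume.restrict Ohat) :=
    hv.1.aestronglyMeasurable.aemeasurable
  -- change of variables for the double integral
  have hslob : slobSq s O v = absDet B * (absDet B *
      ∫ x in Ohat, ∫ y in Ohat,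
        |v (x0 + B x) - v (x0 + B y)| ^ 2 / ‖B (x - y)‖ ^ ((n:ℝ) + 2 * s)) := by
    unfold slobSq
    rw [hO, my_cov x0 B hOmeas]
    congr 1
    rw [← integral_const_mul]
    refine integral_congr_ae (Filter.Eventually.of_forall fun x => ?_)
    beta_reduce
    rw [my_cov x0 B hOmeas]
    congr 1
    refine integral_congr_ae (Filter.Eventually.of_forall fun y => ?_)
    beta_reduce
    rw [add_sub_add_left_eq_sub, ← map_sub]
  -- change of variables for the weighted term
  have hweight : ∀ Γ : Set (Euc n), (∫ x in O, v x ^ 2 / infDist x Γ ^ (2 * s)) =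
      absDet B * ∫ x in Ohat, v (x0 + B x) ^ 2 / infDist (x0 + B x) Γ ^ (2 * s) := by
    intro Γ
    rw [hO]
    exact my_cov x0 B hOmeas _
  have hOtilde : tildeNormSq s O v = absDet B * (absDet B *
      ∫ x in Ohat, ∫ y in Ohat,
        |v (x0 + B x) - v (x0 + B y)| ^ 2 / ‖B (x - y)‖ ^ ((n:ℝ) + 2 * s)) +
      absDet B * ∫ x in Ohat, v (x0 + B x) ^ 2 /
        infDist (x0 + B x) (frontier O) ^ (2 * s) := by
    unfold tildeNormSq
    rw [hslob, hweight (frontier O)]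
  have hhat : tildeNormSq s Ohat (fun y => v (x0 + B y)) =
      slobSq s Ohat (fun y => v (x0 + B y)) +
      ∫ x in Ohat, v (x0 + B x) ^ 2 / infDist x (frontier Ohat) ^ (2 * s) := rfl
  have hSrfl : slobSq s Ohat (fun y => v (x0 + B y)) =
      ∫ x in Ohat, ∫ y in Ohat,
        |v (x0 + B x) - v (x0 + B y)| ^ 2 / ‖x - y‖ ^ ((n:ℝ) + 2 * s) := rfl
  -- sandwich for the double integral
  have hnum : AEMeasurable (fun pr : Euc n × Euc n => |v (x0 + B pr.1) - v (x0 + B pr.2)| ^ 2)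
      ((volume.restrict Ohat).prod (volume.restrict Ohat)) := by
    have h1 : AEMeasurable (fun pr : Euc n × Euc n => v (x0 + B pr.1))
        ((volume.restrict Ohat).prod (volume.restrict Ohat)) :=
      hvm.comp_quasiMeasurePreserving MeasureTheory.Measure.quasiMeasurePreserving_fst
    have h2 : AEMeasurable (fun pr : Euc n × Euc n => v (x0 + B pr.2))
        ((volume.restrict Ohat).prod (volume.restrict Ohat)) :=
      hvm.comp_quasiMeasurePreserving MeasureTheory.Measure.quasiMeasurePreserving_snd
    exact (continuous_abs.measurable.comp_aemeasurable (h1.sub h2)).pow_const 2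
  have hdenB : Measurable (fun pr : Euc n × Euc n => ‖B (pr.1 - pr.2)‖ ^ ((n:ℝ) + 2 * s)) :=
    ((Real.continuous_rpow_const hp.le).comp
      ((B.continuous.comp (continuous_fst.sub continuous_snd)).norm)).measurable
  have hdenI : Measurable (fun pr : Euc n × Euc n => ‖pr.1 - pr.2‖ ^ ((n:ℝ) + 2 * s)) :=
    ((Real.continuous_rpow_const hp.le).comp
      ((continuous_fst.sub continuous_snd).norm)).measurable
  have hptT : ∀ x y : Euc n,
      (opN B ^ (-((n:ℝ) + 2 * s)) *
        (|v (x0 + B x) - v (x0 + B y)| ^ 2 / ‖x - y‖ ^ ((n:ℝ) + 2 * s)) ≤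
        |v (x0 + B x) - v (x0 + B y)| ^ 2 / ‖B (x - y)‖ ^ ((n:ℝ) + 2 * s)) ∧
      (|v (x0 + B x) - v (x0 + B y)| ^ 2 / ‖B (x - y)‖ ^ ((n:ℝ) + 2 * s) ≤
        opN B.symm ^ ((n:ℝ) + 2 * s) *
        (|v (x0 + B x) - v (x0 + B y)| ^ 2 / ‖x - y‖ ^ ((n:ℝ) + 2 * s))) := by
    intro x y
    rcases eq_or_ne x y with rfl | hne
    · simp
    · have hz : x - y ≠ 0 := sub_ne_zero.mpr hne
      have hd : 0 < ‖x - y‖ := norm_pos_iff.mpr hz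
      have hD : 0 < ‖B (x - y)‖ := by
        refine norm_pos_iff.mpr fun h => hz ?_
        exact B.injective (h.trans (map_zero B).symm)
      have hle1 : ‖B (x - y)‖ ≤ opN B * ‖x - y‖ := (B : Euc n →L[ℝ] Euc n).le_opNorm _
      have hle2 : ‖x - y‖ ≤ opN B.symm * ‖B (x - y)‖ := by
        have h0 := (B.symm : Euc n →L[ℝ] Euc n).le_opNorm (B (x - y))
        simpa [opN] using h0
      exact my_div_sandwich (sq_nonneg _) hd hD hb hb' hp.le hle1 hle2
  have hT : opN B ^ (-((n:ℝ) + 2 * s)) *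
      (∫ x in Ohat, ∫ y in Ohat,
        |v (x0 + B x) - v (x0 + B y)| ^ 2 / ‖x - y‖ ^ ((n:ℝ) + 2 * s)) ≤
      (∫ x in Ohat, ∫ y in Ohat,
        |v (x0 + B x) - v (x0 + B y)| ^ 2 / ‖B (x - y)‖ ^ ((n:ℝ) + 2 * s)) ∧
      (∫ x in Ohat, ∫ y in Ohat,
        |v (x0 + B x) - v (x0 + B y)| ^ 2 / ‖B (x - y)‖ ^ ((n:ℝ) + 2 * s)) ≤
      opN B.symm ^ ((n:ℝ) + 2 * s) *
      ∫ x in Ohat, ∫ y in Ohat,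
        |v (x0 + B x) - v (x0 + B y)| ^ 2 / ‖x - y‖ ^ ((n:ℝ) + 2 * s) := by
    refine my_sandwich2 (Real.rpow_pos_of_pos hb _)
      ((hnum.div hdenB.aemeasurable).aestronglyMeasurable)
      ((hnum.div hdenI.aemeasurable).aestronglyMeasurable)
      (fun x y => div_nonneg (sq_nonneg _) (Real.rpow_nonneg (norm_nonneg _) _))
      (fun x y => (hptT x y).1) (fun x y => (hptT x y).2)
  -- sandwich for the weighted term
  have hfr : frontier O = (fun y => x0 + B y) '' frontier Ohat := by
    rw [hO]
    exact my_frontier_map x0 B Ohat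
  have hWfmeas : AEStronglyMeasurable
      (fun x => v (x0 + B x) ^ 2 / infDist (x0 + B x) (frontier O) ^ (2 * s))
      (volume.restrict Ohat) := by
    refine ((hvm.pow_const 2).div ?_).aestronglyMeasurable
    exact (((Real.continuous_rpow_const h2s.le).comp
      ((continuous_infDist_pt _).comp (continuous_const.add B.continuous))).measurable).aemeasurable
  have hWgmeas : AEStronglyMeasurable
      (fun x => v (x0 + B x) ^ 2 / infDist x (frontier Ohat) ^ (2 * s))
      (volume.restrict Ohat) := by
    refine ((hvm.pow_const 2).div ?_).aestronglyMeasurable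
    exact (((Real.continuous_rpow_const h2s.le).comp
      (continuous_infDist_pt _)).measurable).aemeasurable
  have hWpt : ∀ᵐ x ∂(volume.restrict Ohat),
      (opN B ^ (-(2 * s)) *
        (v (x0 + B x) ^ 2 / infDist x (frontier Ohat) ^ (2 * s)) ≤
        v (x0 + B x) ^ 2 / infDist (x0 + B x) (frontier O) ^ (2 * s)) ∧
      (v (x0 + B x) ^ 2 / infDist (x0 + B x) (frontier O) ^ (2 * s) ≤
        opN B.symm ^ (2 * s) *
        (v (x0 + B x) ^ 2 / infDist x (frontier Ohat) ^ (2 * s))) := by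
    rw [ae_restrict_iff' hOmeas]
    refine Filter.Eventually.of_forall fun x hx => ?_
    have hne : (frontier Ohat).Nonempty := by
      rw [nonempty_iff_ne_empty]
      intro hemp
      rcases frontier_eq_empty_iff.mp hemp with h | h
      · rw [h] at hx; exact hx
      · exact NormedSpace.unbounded_univ ℝ (Euc n) (h ▸ hOhat.2.1)
    have hxnotfr : x ∉ frontier Ohat := by
      rw [hOhat.1.frontier_eq]
      exact fun h => h.2 hx
    have hdpos : 0 < infDist x (frontier Ohat) :=
      (isClosed_frontier.notMem_iff_infDist_pos hne).1 hxnotfr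
    have hD1 : infDist (x0 + B x) (frontier O) ≤ opN B * infDist x (frontier Ohat) := by
      rw [hfr]
      exact my_infDist_map_le x0 B hb x _
    have hD2 : infDist x (frontier Ohat) ≤
        opN B.symm * infDist (x0 + B x) (frontier O) := by
      have h0 := my_infDist_map_le (-(B.symm x0)) B.symm hb' (x0 + B x) (frontier O)
      have e1 : -(B.symm x0) + B.symm (x0 + B x) = x := by
        rw [map_add, B.symm_apply_apply, neg_add_cancel_left]
      have e2 : ((fun y => -(B.symm x0) + B.symm y) '' frontier O) = frontier Ohat := by
        rw [hfr, ← image_comp]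
        have hcomp : ((fun y => -(B.symm x0) + B.symm y) ∘ (fun y => x0 + B y)) = id := by
          funext z
          show -(B.symm x0) + B.symm (x0 + B z) = z
          rw [map_add, B.symm_apply_apply, neg_add_cancel_left]
        rw [hcomp, image_id]
      rw [e1, e2] at h0
      exact h0
    have hDpos : 0 < infDist (x0 + B x) (frontier O) := by
      by_contra hcon
      push_neg at hcon
      nlinarith
    exact my_div_sandwich (sq_nonneg _) hdpos hDpos hb hb' h2s.le hD1 hD2
  have hW : opN B ^ (-(2 * s)) *
      (∫ x in Ohat, v (x0 + B x) ^ 2 / infDist x (frontier Ohat) ^ (2 * s)) ≤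
      (∫ x in Ohat, v (x0 + B x) ^ 2 / infDist (x0 + B x) (frontier O) ^ (2 * s)) ∧
      (∫ x in Ohat, v (x0 + B x) ^ 2 / infDist (x0 + B x) (frontier O) ^ (2 * s)) ≤
      opN B.symm ^ (2 * s) *
      ∫ x in Ohat, v (x0 + B x) ^ 2 / infDist x (frontier Ohat) ^ (2 * s) := by
    refine my_sandwich (Real.rpow_pos_of_pos hb _) hWfmeas hWgmeas
      (Filter.Eventually.of_forall fun x =>
        div_nonneg (sq_nonneg _) (Real.rpow_nonneg infDist_nonneg _))
      (hWpt.mono fun x h => h.1) (hWpt.mono fun x h => h.2)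
  obtain ⟨hT1, hT2⟩ := hT
  obtain ⟨hW1, hW2⟩ := hW
  have hS0 : 0 ≤ ∫ x in Ohat, ∫ y in Ohat,
      |v (x0 + B x) - v (x0 + B y)| ^ 2 / ‖x - y‖ ^ ((n:ℝ) + 2 * s) :=
    integral_nonneg fun x => integral_nonneg fun y =>
      div_nonneg (sq_nonneg _) (Real.rpow_nonneg (norm_nonneg _) _)
  have hWh0 : 0 ≤ ∫ x in Ohat, v (x0 + B x) ^ 2 / infDist x (frontier Ohat) ^ (2 * s) :=
    integral_nonneg fun x => div_nonneg (sq_nonneg _) (Real.rpow_nonneg infDist_nonneg _)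
  have hc2 : (0:ℝ) ≤ absDet B * opN B ^ (-(2 * s)) :=
    mul_nonneg hdet.le (Real.rpow_pos_of_pos hb _).le
  have hc2' : (0:ℝ) ≤ absDet B * opN B.symm ^ (2 * s) :=
    mul_nonneg hdet.le (Real.rpow_pos_of_pos hb' _).le
  have hsplit : opN B ^ (-((n:ℝ) + 2 * s)) = opN B ^ (-(n:ℝ)) * opN B ^ (-(2 * s)) := by
    rw [← Real.rpow_add hb]
    ring_nf
  have hsplit' : opN B.symm ^ ((n:ℝ) + 2 * s) = opN B.symm ^ (n:ℝ) * opN B.symm ^ (2 * s) := by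
    rw [← Real.rpow_add hb']
  constructor
  · rw [hOtilde, hhat, hSrfl, mul_add]
    refine add_le_add ?_ ?_
    · calc absDet B * opN B ^ (-(2 * s)) * min (absDet B * opN B ^ (-(n:ℝ))) 1 *
          (∫ x in Ohat, ∫ y in Ohat,
            |v (x0 + B x) - v (x0 + B y)| ^ 2 / ‖x - y‖ ^ ((n:ℝ) + 2 * s))
          ≤ absDet B * opN B ^ (-(2 * s)) * (absDet B * opN B ^ (-(n:ℝ))) *
          (∫ x in Ohat, ∫ y in Ohat,
            |v (x0 + B x) - v (x0 + B y)| ^ 2 / ‖x - y‖ ^ ((n:ℝ) + 2 * s)) :=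
            mul_le_mul_of_nonneg_right
              (mul_le_mul_of_nonneg_left (min_le_left _ _) hc2) hS0
        _ = absDet B * absDet B * (opN B ^ (-((n:ℝ) + 2 * s)) *
            ∫ x in Ohat, ∫ y in Ohat,
              |v (x0 + B x) - v (x0 + B y)| ^ 2 / ‖x - y‖ ^ ((n:ℝ) + 2 * s)) := by
            rw [hsplit]; ring
        _ ≤ absDet B * absDet B * ∫ x in Ohat, ∫ y in Ohat,
            |v (x0 + B x) - v (x0 + B y)| ^ 2 / ‖B (x - y)‖ ^ ((n:ℝ) + 2 * s) :=
            mul_le_mul_of_nonneg_left hT1 (mul_nonneg hdet.le hdet.le)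
        _ = absDet B * (absDet B * ∫ x in Ohat, ∫ y in Ohat,
            |v (x0 + B x) - v (x0 + B y)| ^ 2 / ‖B (x - y)‖ ^ ((n:ℝ) + 2 * s)) :=
            mul_assoc _ _ _
    · calc absDet B * opN B ^ (-(2 * s)) * min (absDet B * opN B ^ (-(n:ℝ))) 1 *
          (∫ x in Ohat, v (x0 + B x) ^ 2 / infDist x (frontier Ohat) ^ (2 * s))
          ≤ absDet B * opN B ^ (-(2 * s)) * 1 *
          (∫ x in Ohat, v (x0 + B x) ^ 2 / infDist x (frontier Ohat) ^ (2 * s)) :=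
            mul_le_mul_of_nonneg_right
              (mul_le_mul_of_nonneg_left (min_le_right _ _) hc2) hWh0
        _ = absDet B * (opN B ^ (-(2 * s)) *
            ∫ x in Ohat, v (x0 + B x) ^ 2 / infDist x (frontier Ohat) ^ (2 * s)) := by
            ring
        _ ≤ absDet B * ∫ x in Ohat, v (x0 + B x) ^ 2 /
            infDist (x0 + B x) (frontier O) ^ (2 * s) :=
            mul_le_mul_of_nonneg_left hW1 hdet.le
  · rw [hOtilde, hhat, hSrfl, mul_add]
    refine add_le_add ?_ ?_
    · calc absDet B * (absDet B * ∫ x in Ohat, ∫ y in Ohat,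
            |v (x0 + B x) - v (x0 + B y)| ^ 2 / ‖B (x - y)‖ ^ ((n:ℝ) + 2 * s))
          ≤ absDet B * (absDet B * (opN B.symm ^ ((n:ℝ) + 2 * s) *
            ∫ x in Ohat, ∫ y in Ohat,
              |v (x0 + B x) - v (x0 + B y)| ^ 2 / ‖x - y‖ ^ ((n:ℝ) + 2 * s))) :=
            mul_le_mul_of_nonneg_left (mul_le_mul_of_nonneg_left hT2 hdet.le) hdet.le
        _ = absDet B * opN B.symm ^ (2 * s) * (absDet B * opN B.symm ^ (n:ℝ)) *
            (∫ x in Ohat, ∫ y in Ohat,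
              |v (x0 + B x) - v (x0 + B y)| ^ 2 / ‖x - y‖ ^ ((n:ℝ) + 2 * s)) := by
            rw [hsplit']; ring
        _ ≤ absDet B * opN B.symm ^ (2 * s) * max (absDet B * opN B.symm ^ (n:ℝ)) 1 *
            (∫ x in Ohat, ∫ y in Ohat,
              |v (x0 + B x) - v (x0 + B y)| ^ 2 / ‖x - y‖ ^ ((n:ℝ) + 2 * s)) :=
            mul_le_mul_of_nonneg_right
              (mul_le_mul_of_nonneg_left (le_max_left _ _) hc2') hS0
    · calc absDet B * ∫ x in Ohat, v (x0 + B x) ^ 2 /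
            infDist (x0 + B x) (frontier O) ^ (2 * s)
          ≤ absDet B * (opN B.symm ^ (2 * s) *
            ∫ x in Ohat, v (x0 + B x) ^ 2 / infDist x (frontier Ohat) ^ (2 * s)) :=
            mul_le_mul_of_nonneg_left hW2 hdet.le
        _ = absDet B * opN B.symm ^ (2 * s) * 1 *
            (∫ x in Ohat, v (x0 + B x) ^ 2 / infDist x (frontier Ohat) ^ (2 * s)) := by
            ring
        _ ≤ absDet B * opN B.symm ^ (2 * s) * max (absDet B * opN B.symm ^ (n:ℝ)) 1 *
            (∫ x in Ohat, v (x0 + B x) ^ 2 / infDist x (frontier Ohat) ^ (2 * s)) :=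
            mul_le_mul_of_nonneg_right
              (mul_le_mul_of_nonneg_left (le_max_right _ _) hc2') hWh0


end
end
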